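/- arXiv:2006.06811 — 4 statements merged into one kernel-verified Lean document; each statement's English description precedes it below -/
import Mathlib

section
/- The dual of the X-SAGE cone satisfies C_X(𝒜)* = cl{ exp(y) : y ∈ ℝ^𝒜, (y,1) ∈ G_X(𝒜)* }, where exp is applied entrywise, the dual cone of C_X(𝒜) is taken in ℝ^𝒜, the dual cone of the circuit graph G_X(𝒜) is taken in ℝ^𝒜 × ℝ, and cl denotes topological closure. -/
open Finset

/-- Dot product on `Fin n → ℝ`. -/
noncomputable def dotp {n : ℕ} (y x : Fin n → ℝ) : ℝ := ∑ i, y i * x i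

/-- Support function `σ_X : ℝⁿ → ℝ ∪ {±∞}` of a set `X ⊆ ℝⁿ`. -/
noncomputable def suppFn {n : ℕ} (X : Set (Fin n → ℝ)) (y : Fin n → ℝ) : EReal :=
  ⨆ x ∈ X, ((dotp y x : ℝ) : EReal)

/-- The linear map `𝒜 : ℝ^𝒜 → ℝⁿ`, `ν ↦ Σ_α ν_α α`. -/
noncomputable def Amap {n m : ℕ} (A : Fin m → Fin n → ℝ) (ν : Fin m → ℝ) : Fin n → ℝ :=
  fun j => ∑ i, ν i * A i j

/-- `N_β = {ν : ν_α ≥ 0 (α ≠ β), Σ ν_α = 0}`. -/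
def Nbeta {m : ℕ} (b : Fin m) : Set (Fin m → ℝ) :=
  {ν | (∀ i, i ≠ b → 0 ≤ ν i) ∧ ∑ i, ν i = 0}

/-- Two vectors are proportional if one is a scalar multiple of the other. -/
def Proportional {m : ℕ} (u v : Fin m → ℝ) : Prop :=
  ∃ t : ℝ, u = t • v ∨ v = t • u

/-- The augmented support function `ν ↦ σ_X(-𝒜ν)`. -/
noncomputable def sigA {n m : ℕ} (X : Set (Fin n → ℝ)) (A : Fin m → Fin n → ℝ)
    (ν : Fin m → ℝ) : EReal :=
  suppFn X (-(Amap A ν))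

/-- The map `ν ↦ σ_X(-𝒜ν)` is affine on the segment `[ν1, ν2]`. -/
def SigmaAffineOnSeg {n m : ℕ} (X : Set (Fin n → ℝ)) (A : Fin m → Fin n → ℝ)
    (ν1 ν2 : Fin m → ℝ) : Prop :=
  ∀ t : ℝ, t ∈ Set.Icc (0:ℝ) 1 →
    sigA X A (t • ν1 + (1 - t) • ν2) =
      (t : EReal) * sigA X A ν1 + ((1 - t : ℝ) : EReal) * sigA X A ν2

/-- `ν` is an `X`-circuit of `𝒜` (with negative index allowed only at `b`). -/
def IsXCircuit {n m : ℕ} (X : Set (Fin n → ℝ)) (A : Fin m → Fin n → ℝ)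
    (b : Fin m) (ν : Fin m → ℝ) : Prop :=
  ν ∈ Nbeta b ∧ ν ≠ 0 ∧ sigA X A ν < ⊤ ∧
  ¬ ∃ (ν1 ν2 : Fin m → ℝ) (θ : ℝ), ν1 ∈ Nbeta b ∧ ν2 ∈ Nbeta b ∧
      ¬ Proportional ν1 ν2 ∧ θ ∈ Set.Ioo (0:ℝ) 1 ∧
      ν = θ • ν1 + (1 - θ) • ν2 ∧ SigmaAffineOnSeg X A ν1 ν2

/-- All finite nonnegative combinations of elements of `S` (including `0`). -/
def coneHull {E : Type*} [AddCommMonoid E] [SMul ℝ E] (S : Set E) : Set E :=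
  {x | ∃ (k : ℕ) (t : Fin k → ℝ) (v : Fin k → E),
    (∀ j, 0 ≤ t j) ∧ (∀ j, v j ∈ S) ∧ x = ∑ j, t j • v j}

/-- `v` is an edge generator of the convex cone `K`. -/
def IsEdgeGenerator {E : Type*} [AddCommMonoid E] [SMul ℝ E] (K : Set E) (v : E) : Prop :=
  v ≠ 0 ∧ v ∈ K ∧ ∀ u ∈ K, ∀ w ∈ K, v = u + w →
    (∃ a : ℝ, 0 ≤ a ∧ u = a • v) ∧ (∃ b : ℝ, 0 ≤ b ∧ w = b • v)

/-- The `X`-AGE cone `C_X(𝒜, β)`, as a cone of coefficient vectors. -/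
def AgeCone {n m : ℕ} (X : Set (Fin n → ℝ)) (A : Fin m → Fin n → ℝ) (b : Fin m) :
    Set (Fin m → ℝ) :=
  {c | (∀ i, i ≠ b → 0 ≤ c i) ∧ ∀ x ∈ X, 0 ≤ ∑ i, c i * Real.exp (dotp (A i) x)}

/-- The `X`-SAGE cone `C_X(𝒜) = Σ_β C_X(𝒜, β)`. -/
def Sage {n m : ℕ} (X : Set (Fin n → ℝ)) (A : Fin m → Fin n → ℝ) : Set (Fin m → ℝ) :=
  {c | ∃ f : Fin m → (Fin m → ℝ), (∀ b, f b ∈ AgeCone X A b) ∧ c = ∑ b, f b}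

/-- One summand of the relative entropy, with the conventions `0·log 0 = 0` and
`D = ∞` if `a > 0` while `c ≤ 0`. -/
noncomputable def relEnt (a c : ℝ) : EReal :=
  if a = 0 then 0 else if 0 < c then ((a * Real.log (a / c) : ℝ) : EReal) else ⊤

/-- The relative entropy `D(ν_{∖β}, e · c_{∖β})`. -/
noncomputable def relEntSum {m : ℕ} (b : Fin m) (ν c : Fin m → ℝ) : EReal :=
  ∑ i ∈ Finset.univ.erase b, relEnt (ν i) (Real.exp 1 * c i)

/-- Condition (★): `ν ∈ N_β`, `ν ≠ 0`, `σ_X(-𝒜ν) + D(ν_{∖β}, e c_{∖β}) ≤ c_β`. -/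
def StarCond {n m : ℕ} (X : Set (Fin n → ℝ)) (A : Fin m → Fin n → ℝ)
    (b : Fin m) (c ν : Fin m → ℝ) : Prop :=
  ν ∈ Nbeta b ∧ ν ≠ 0 ∧ sigA X A ν + relEntSum b ν c ≤ (c b : EReal)

/-- The `λ`-witnessed AGE cone `C_X(𝒜, λ)` for a normalized `λ` with `λ_β = -1`. -/
noncomputable def WitnessCone {n m : ℕ} (X : Set (Fin n → ℝ)) (A : Fin m → Fin n → ℝ)
    (b : Fin m) (l : Fin m → ℝ) : Set (Fin m → ℝ) :=
  {c | (∀ i, i ≠ b → 0 ≤ c i) ∧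
    (-(c b)) * Real.exp ((sigA X A l).toReal) ≤
      ∏ i ∈ Finset.univ.filter (fun i => 0 < l i), (c i / l i) ^ (l i)}

/-- Normalized `X`-circuits in `N_β`. -/
def LambdaB {n m : ℕ} (X : Set (Fin n → ℝ)) (A : Fin m → Fin n → ℝ) (b : Fin m) :
    Set (Fin m → ℝ) :=
  {l | IsXCircuit X A b l ∧ l b = -1}

/-- All normalized `X`-circuits of `𝒜`. -/
def Lambda {n m : ℕ} (X : Set (Fin n → ℝ)) (A : Fin m → Fin n → ℝ) : Set (Fin m → ℝ) :=
  ⋃ b, LambdaB X A b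

/-- Functional form `φ_λ = (λ, σ_X(-𝒜λ)) ∈ ℝ^𝒜 × ℝ`. -/
noncomputable def phiVec {n m : ℕ} (X : Set (Fin n → ℝ)) (A : Fin m → Fin n → ℝ)
    (l : Fin m → ℝ) : (Fin m → ℝ) × ℝ :=
  (l, (sigA X A l).toReal)

/-- Functional form as an affine function `φ_λ(y) = Σ y_α λ_α + σ_X(-𝒜λ)`. -/
noncomputable def phiFun {n m : ℕ} (X : Set (Fin n → ℝ)) (A : Fin m → Fin n → ℝ)
    (l : Fin m → ℝ) (y : Fin m → ℝ) : ℝ :=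
  (∑ i, y i * l i) + (sigA X A l).toReal

/-- The circuit graph `G_X(𝒜)`. -/
noncomputable def circuitGraph {n m : ℕ} (X : Set (Fin n → ℝ)) (A : Fin m → Fin n → ℝ) :
    Set ((Fin m → ℝ) × ℝ) :=
  coneHull ((phiVec X A '' Lambda X A) ∪ {((0 : Fin m → ℝ), (1 : ℝ))})

/-- The reduced normalized `X`-circuits `Λ*_X(𝒜)`. -/
noncomputable def LambdaStar {n m : ℕ} (X : Set (Fin n → ℝ)) (A : Fin m → Fin n → ℝ) :
    Set (Fin m → ℝ) :=
  {l | l ∈ Lambda X A ∧ IsEdgeGenerator (circuitGraph X A) (phiVec X A l)}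

/-- `λ`-witnessed AGE cone for a normalized circuit, with `β` recovered from `λ`. -/
noncomputable def WitnessConeL {n m : ℕ} (X : Set (Fin n → ℝ)) (A : Fin m → Fin n → ℝ)
    (l : Fin m → ℝ) : Set (Fin m → ℝ) :=
  ⋃ b ∈ {b : Fin m | l b = -1}, WitnessCone X A b l

/-- Dual cone of a set of coefficient vectors in `ℝ^𝒜`. -/
def dualConeV {m : ℕ} (K : Set (Fin m → ℝ)) : Set (Fin m → ℝ) :=
  {v | ∀ c ∈ K, 0 ≤ ∑ i, v i * c i}

/-- Dual cone of a subset of `ℝ^𝒜 × ℝ`. -/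
def dualConeP {m : ℕ} (K : Set ((Fin m → ℝ) × ℝ)) : Set ((Fin m → ℝ) × ℝ) :=
  {p | ∀ q ∈ K, 0 ≤ (∑ i, p.1 i * q.1 i) + p.2 * q.2}

/-- The basis functions `x ↦ exp(αᵀx)`, `α ∈ 𝒜`, are linearly independent on `X`. -/
def ExpLinIndep {n m : ℕ} (X : Set (Fin n → ℝ)) (A : Fin m → Fin n → ℝ) : Prop :=
  LinearIndependent ℝ (fun i : Fin m => fun x : X => Real.exp (dotp (A i) (x : Fin n → ℝ)))

/-- `X` is a polyhedron: an intersection of finitely many closed halfspaces. -/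
def IsPolyhedron {n : ℕ} (X : Set (Fin n → ℝ)) : Prop :=
  ∃ (k : ℕ) (a : Fin k → Fin n → ℝ) (bb : Fin k → ℝ),
    X = {x | ∀ i, dotp (a i) x ≤ bb i}

/-- Minkowski sum `Σ_{l ∈ Λ} C(l)` (finite sums, one summand per `l`;
the empty sum gives `{0}`). -/
def MinkSumOver {m : ℕ} (Λ : Set (Fin m → ℝ)) (C : (Fin m → ℝ) → Set (Fin m → ℝ)) :
    Set (Fin m → ℝ) :=
  {c | ∃ (s : Finset (Fin m → ℝ)) (f : (Fin m → ℝ) → (Fin m → ℝ)),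
    (↑s ⊆ Λ) ∧ (∀ l ∈ s, f l ∈ C l) ∧ c = ∑ l ∈ s, f l}


/-!
For `y ∈ ℝ^𝒜` put `φ_λ(y) = ⟨y, λ⟩ + σ_X(-𝒜λ)`. The theorem rests on the equivalence
`exp y ∈ C_X(𝒜)* ↔ φ_λ(y) ≥ 0 for all λ ∈ Λ_X(𝒜) ↔ (y, 1) ∈ G_X(𝒜)*`.

If `exp y` is in the dual, then for each normalized circuit `λ` at `β` there is a vector of
`C_X(𝒜, β)`, certified by weighted AM–GM with the weights `λ_α` (`α ≠ β`), whose pairing with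
`exp y` is `1 - exp (-φ_λ(y))`; hence `φ_λ(y) ≥ 0`.

Conversely, the extreme directions of the epigraph cone `{(ν, t) : ν ∈ N_β, σ_X(-𝒜ν) ≤ t}` are
`(0, 1)` and the multiples of the functional forms `φ_λ`, so by Krein–Milman on a compact slice
`⟨y, ν⟩ + t ≥ 0` on the whole cone. By Hahn–Banach this puts `y` in the closure of the exponent
vectors `z` with `z_α ≥ αᵀx + s` (`α ≠ β`) and `z_β ≤ βᵀx + s` for some `x ∈ X`, `s ∈ ℝ`, and for
these `exp z` pairs nonnegatively with `C_X(𝒜, β)` by monotonicity of `exp`.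

Finally `C_X(𝒜)*` is the closure of its strictly positive part, because it contains the positive
vector `(exp αᵀx₀)_α` for any `x₀ ∈ X`; the positive part is the image under `exp` of the set
described above.
-/

open Real Set Filter Topology

variable {n m : ℕ}

lemma dotp_neg_Amap (A : Fin m → Fin n → ℝ) (ν : Fin m → ℝ) (x : Fin n → ℝ) :
    dotp (-(Amap A ν)) x = -∑ i, ν i * dotp (A i) x := by
  simp only [dotp, Amap, Pi.neg_apply, neg_mul, Finset.sum_neg_distrib, Finset.sum_mul,
    Finset.mul_sum, mul_assoc]
  rw [Finset.sum_comm]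

section SupportFunction

variable {X : Set (Fin n → ℝ)} {A : Fin m → Fin n → ℝ} {ν : Fin m → ℝ}

lemma sigA_le_coe_iff {t : ℝ} :
    sigA X A ν ≤ t ↔ ∀ x ∈ X, -∑ i, ν i * dotp (A i) x ≤ t := by
  simp only [sigA, suppFn, iSup₂_le_iff, EReal.coe_le_coe_iff, dotp_neg_Amap]

lemma neg_sum_le_sigA {x : Fin n → ℝ} (hx : x ∈ X) :
    ((-∑ i, ν i * dotp (A i) x : ℝ) : EReal) ≤ sigA X A ν := by
  rw [← dotp_neg_Amap]
  exact le_biSup (fun x => ((dotp (-(Amap A ν)) x : ℝ) : EReal)) hx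

lemma neg_sum_le_toReal_sigA (hν : sigA X A ν ≠ ⊤) {x : Fin n → ℝ} (hx : x ∈ X) :
    -∑ i, ν i * dotp (A i) x ≤ (sigA X A ν).toReal :=
  EReal.coe_le_coe_iff.1 ((neg_sum_le_sigA hx).trans (EReal.le_coe_toReal hν))

lemma sigA_ne_bot (hX : X.Nonempty) : sigA X A ν ≠ ⊥ :=
  let ⟨_, hx⟩ := hX
  ne_bot_of_le_ne_bot (EReal.coe_ne_bot _) (neg_sum_le_sigA hx)

lemma coe_toReal_sigA (hX : X.Nonempty) (hν : sigA X A ν ≠ ⊤) :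
    ((sigA X A ν).toReal : EReal) = sigA X A ν :=
  EReal.coe_toReal hν (sigA_ne_bot hX)

lemma sigA_smul_le_coe_iff {c t : ℝ} (hc : 0 < c) :
    sigA X A (c • ν) ≤ t ↔ sigA X A ν ≤ ((t / c : ℝ) : EReal) := by
  simp only [sigA_le_coe_iff, Pi.smul_apply, smul_eq_mul, le_div_iff₀' hc, mul_assoc,
    ← Finset.mul_sum, mul_neg]

lemma sigA_smul (hX : X.Nonempty) (hν : sigA X A ν ≠ ⊤) {c : ℝ} (hc : 0 < c) :
    sigA X A (c • ν) = ((c * (sigA X A ν).toReal : ℝ) : EReal) := by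
  have hle : ∀ {μ : Fin m → ℝ} {c : ℝ}, 0 < c → sigA X A μ ≠ ⊤ →
      sigA X A (c • μ) ≤ ((c * (sigA X A μ).toReal : ℝ) : EReal) := fun hc hμ => by
    rw [sigA_smul_le_coe_iff hc, mul_div_cancel_left₀ _ hc.ne', coe_toReal_sigA hX hμ]
  have hcν : sigA X A (c • ν) ≠ ⊤ := ne_top_of_le_ne_top (EReal.coe_ne_top _) (hle hc hν)
  refine (hle hc hν).antisymm ?_
  have h := hle (inv_pos.2 hc) hcν
  rw [smul_smul, inv_mul_cancel₀ hc.ne', one_smul, ← coe_toReal_sigA hX hν,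
    EReal.coe_le_coe_iff, ← div_eq_inv_mul, le_div_iff₀' hc] at h
  rw [← coe_toReal_sigA hX hcν]
  exact EReal.coe_le_coe_iff.2 h

lemma sigA_ne_top_and_toReal_eq_of_affineOnSeg (hX : X.Nonempty) {ν₁ ν₂ : Fin m → ℝ} {θ : ℝ}
    (hθ : θ ∈ Ioo (0 : ℝ) 1) (haff : SigmaAffineOnSeg X A ν₁ ν₂)
    (hσ : sigA X A (θ • ν₁ + (1 - θ) • ν₂) ≠ ⊤) :
    sigA X A ν₁ ≠ ⊤ ∧ sigA X A ν₂ ≠ ⊤ ∧ (sigA X A (θ • ν₁ + (1 - θ) • ν₂)).toReal =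
      θ * (sigA X A ν₁).toReal + (1 - θ) * (sigA X A ν₂).toReal := by
  rw [haff θ ⟨hθ.1.le, hθ.2.le⟩] at hσ ⊢
  have hθ' : 0 < 1 - θ := sub_pos.2 hθ.2
  have h₁ := sigA_ne_bot (A := A) (ν := ν₁) hX
  have h₂ := sigA_ne_bot (A := A) (ν := ν₂) hX
  generalize 1 - θ = r at *
  generalize sigA X A ν₁ = s₁ at *
  generalize sigA X A ν₂ = s₂ at *
  induction s₁ using EReal.rec <;> induction s₂ using EReal.rec <;>
    simp_all [EReal.coe_mul_top_of_pos, ← EReal.coe_mul, ← EReal.coe_add]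

end SupportFunction

section Nbeta

variable {b : Fin m} {ν : Fin m → ℝ}

lemma zero_mem_Nbeta : (0 : Fin m → ℝ) ∈ Nbeta b :=
  ⟨fun _ _ => le_rfl, by simp⟩

lemma smul_mem_Nbeta (hν : ν ∈ Nbeta b) {c : ℝ} (hc : 0 ≤ c) : c • ν ∈ Nbeta b :=
  ⟨fun i hi => mul_nonneg hc (hν.1 i hi), by simp [← Finset.mul_sum, hν.2]⟩

lemma add_mem_Nbeta {μ : Fin m → ℝ} (hν : ν ∈ Nbeta b) (hμ : μ ∈ Nbeta b) : ν + μ ∈ Nbeta b :=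
  ⟨fun i hi => add_nonneg (hν.1 i hi) (hμ.1 i hi), by simp [Finset.sum_add_distrib, hν.2, hμ.2]⟩

lemma isClosed_Nbeta : IsClosed (Nbeta b) := by
  simp only [Nbeta, ofPred_and, ofPred_forall]
  exact (isClosed_iInter fun i => isClosed_iInter fun _ => isClosed_le continuous_const
    (continuous_apply i)).inter (isClosed_eq (by fun_prop) continuous_const)

lemma sum_erase_eq_neg_of_mem_Nbeta (hν : ν ∈ Nbeta b) :
    ∑ i ∈ Finset.univ.erase b, ν i = -ν b := by
  linarith [Finset.add_sum_erase Finset.univ ν (Finset.mem_univ b), hν.2]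

lemma le_neg_apply_of_mem_Nbeta (hν : ν ∈ Nbeta b) {i : Fin m} (hi : i ≠ b) : ν i ≤ -ν b :=
  sum_erase_eq_neg_of_mem_Nbeta hν ▸ Finset.single_le_sum
    (fun j hj => hν.1 j (Finset.ne_of_mem_erase hj)) (Finset.mem_erase.2 ⟨hi, Finset.mem_univ i⟩)

lemma apply_nonpos_of_mem_Nbeta (hν : ν ∈ Nbeta b) : ν b ≤ 0 := by
  have := Finset.sum_nonneg fun j (hj : j ∈ Finset.univ.erase b) =>
    hν.1 j (Finset.ne_of_mem_erase hj)
  linarith [sum_erase_eq_neg_of_mem_Nbeta hν]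

lemma apply_neg_of_mem_Nbeta (hν : ν ∈ Nbeta b) (h0 : ν ≠ 0) : ν b < 0 := by
  refine (apply_nonpos_of_mem_Nbeta hν).lt_of_ne fun hb => h0 (funext fun i => ?_)
  rcases eq_or_ne i b with rfl | hi
  · exact hb
  · exact le_antisymm ((le_neg_apply_of_mem_Nbeta hν hi).trans_eq (by simp [hb]))
      (hν.1 i hi)

end Nbeta

lemma proportional_of_eq_smul {u v w : Fin m → ℝ} {a c : ℝ} (hu : u = a • w) (hv : v = c • w) :
    Proportional u v := by
  rcases eq_or_ne c 0 with rfl | hc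
  · exact ⟨0, Or.inr (by rw [hv, zero_smul, zero_smul])⟩
  · exact ⟨a / c, Or.inl (by rw [hu, hv, smul_smul, div_mul_cancel₀ a hc])⟩

/-- The epigraph of `ν ↦ σ_X(-𝒜ν)` over `N_β`, with `σ_X(-𝒜ν) ≤ t` unfolded pointwise
(`sigA_le_coe_iff`). -/
def epiCone (X : Set (Fin n → ℝ)) (A : Fin m → Fin n → ℝ) (b : Fin m) :
    Set ((Fin m → ℝ) × ℝ) :=
  {p | p.1 ∈ Nbeta b ∧ ∀ x ∈ X, -∑ i, p.1 i * dotp (A i) x ≤ p.2}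

section EpiCone

variable {X : Set (Fin n → ℝ)} {A : Fin m → Fin n → ℝ} {b : Fin m} {p : (Fin m → ℝ) × ℝ}

lemma smul_mem_epiCone (hp : p ∈ epiCone X A b) {c : ℝ} (hc : 0 ≤ c) :
    c • p ∈ epiCone X A b := by
  refine ⟨smul_mem_Nbeta hp.1 hc, fun x hx => ?_⟩
  simpa [mul_assoc, ← Finset.mul_sum] using mul_le_mul_of_nonneg_left (hp.2 x hx) hc

lemma add_mem_epiCone {q : (Fin m → ℝ) × ℝ} (hp : p ∈ epiCone X A b) (hq : q ∈ epiCone X A b) :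
    p + q ∈ epiCone X A b := by
  refine ⟨add_mem_Nbeta hp.1 hq.1, fun x hx => ?_⟩
  have := add_le_add (hp.2 x hx) (hq.2 x hx)
  simp only [Prod.fst_add, Prod.snd_add, Pi.add_apply, add_mul, Finset.sum_add_distrib]
  linarith

lemma convex_epiCone : Convex ℝ (epiCone X A b) :=
  fun _ hp _ hq _ _ ha hc _ => add_mem_epiCone (smul_mem_epiCone hp ha) (smul_mem_epiCone hq hc)

lemma isClosed_epiCone : IsClosed (epiCone X A b) := by
  simp only [epiCone, ofPred_and, ofPred_forall]
  exact (isClosed_Nbeta.preimage continuous_fst).inter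
    (isClosed_iInter fun x => isClosed_iInter fun _ => isClosed_le (by fun_prop) continuous_snd)

lemma sigA_ne_top_of_mem_epiCone (hp : p ∈ epiCone X A b) : sigA X A p.1 ≠ ⊤ :=
  ne_top_of_le_ne_top (EReal.coe_ne_top p.2) (sigA_le_coe_iff.2 hp.2)

lemma toReal_sigA_le_of_mem_epiCone (hX : X.Nonempty) (hp : p ∈ epiCone X A b) :
    (sigA X A p.1).toReal ≤ p.2 := by
  rw [← EReal.coe_le_coe_iff, coe_toReal_sigA hX (sigA_ne_top_of_mem_epiCone hp)]
  exact sigA_le_coe_iff.2 hp.2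

lemma mk_toReal_sigA_mem_epiCone {ν : Fin m → ℝ} (hν : ν ∈ Nbeta b) (hσ : sigA X A ν ≠ ⊤) :
    (ν, (sigA X A ν).toReal) ∈ epiCone X A b :=
  ⟨hν, fun _ hx => neg_sum_le_toReal_sigA hσ hx⟩

end EpiCone

section ConeSlice

variable {E : Type*} [AddCommGroup E] [Module ℝ E] {K : Set E} {ℓ : E →ₗ[ℝ] ℝ}

def IsExtremeDirection (K : Set E) (p : E) : Prop :=
  ∀ q₁ ∈ K, ∀ q₂ ∈ K, q₁ + q₂ = p → ∃ a : ℝ, q₁ = a • p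

lemma inv_smul_mem_slice (hK : ∀ p ∈ K, ∀ c : ℝ, 0 < c → c • p ∈ K) {q : E} (hq : q ∈ K)
    (hℓq : 0 < ℓ q) : (ℓ q)⁻¹ • q ∈ {p ∈ K | ℓ p = 1} :=
  ⟨hK q hq _ (inv_pos.2 hℓq), by rw [map_smul, smul_eq_mul, inv_mul_cancel₀ hℓq.ne']⟩

lemma isExtremeDirection_of_mem_extremePoints (hK : ∀ p ∈ K, ∀ c : ℝ, 0 < c → c • p ∈ K)
    (hℓ : ∀ p ∈ K, p ≠ 0 → 0 < ℓ p) {p : E} (hp : p ∈ {q ∈ K | ℓ q = 1}.extremePoints ℝ) :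
    IsExtremeDirection K p := by
  intro q₁ hq₁ q₂ hq₂ hsum
  rcases eq_or_ne q₁ 0 with rfl | h₁
  · exact ⟨0, (zero_smul ℝ p).symm⟩
  rcases eq_or_ne q₂ 0 with rfl | h₂
  · exact ⟨1, by rw [one_smul, ← hsum, add_zero]⟩
  have ha₁ := hℓ q₁ hq₁ h₁
  have ha₂ := hℓ q₂ hq₂ h₂
  have hseg : p ∈ openSegment ℝ ((ℓ q₁)⁻¹ • q₁) ((ℓ q₂)⁻¹ • q₂) :=
    ⟨ℓ q₁, ℓ q₂, ha₁, ha₂, by rw [← map_add, hsum, hp.1.2],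
      by rw [smul_inv_smul₀ ha₁.ne', smul_inv_smul₀ ha₂.ne', hsum]⟩
  refine ⟨ℓ q₁, ?_⟩
  rw [← hp.2 (inv_smul_mem_slice hK hq₁ ha₁) (inv_smul_mem_slice hK hq₂ ha₂) hseg,
    smul_inv_smul₀ ha₁.ne']

/-- Krein–Milman applied to the compact slice `K ∩ {ℓ = 1}`. -/
lemma nonneg_of_nonneg_on_extremeDirections [TopologicalSpace E] [T2Space E]
    [IsTopologicalAddGroup E] [ContinuousSMul ℝ E] [LocallyConvexSpace ℝ E]
    (hK : ∀ p ∈ K, ∀ c : ℝ, 0 < c → c • p ∈ K) (hKc : Convex ℝ K)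
    (hℓ : ∀ p ∈ K, p ≠ 0 → 0 < ℓ p) (hB : IsCompact {p ∈ K | ℓ p = 1})
    {f : E →ₗ[ℝ] ℝ} (hf : Continuous f) (hext : ∀ p ∈ K, IsExtremeDirection K p → 0 ≤ f p) :
    ∀ p ∈ K, 0 ≤ f p := by
  have hBf : {p ∈ K | ℓ p = 1} ⊆ {p | 0 ≤ f p} := by
    rw [← closure_convexHull_extremePoints hB (hKc.inter (convex_hyperplane ℓ.isLinear 1))]
    refine closure_minimal (convexHull_min (fun p hp => ?_) (convex_halfSpace_ge f.isLinear 0))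
      (isClosed_le continuous_const hf)
    exact hext p hp.1.1 (isExtremeDirection_of_mem_extremePoints hK hℓ hp)
  intro p hp
  rcases eq_or_ne p 0 with rfl | hp0
  · simp
  have hℓp := hℓ p hp hp0
  have := hBf (inv_smul_mem_slice hK hp hℓp)
  rw [mem_ofPred_eq, map_smul, smul_eq_mul] at this
  exact nonneg_of_mul_nonneg_right this (inv_pos.2 hℓp)

end ConeSlice

def augPairing (y : Fin m → ℝ) : ((Fin m → ℝ) × ℝ) →ₗ[ℝ] ℝ where
  toFun p := ∑ i, y i * p.1 i + p.2
  map_add' p q := by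
    simp only [Prod.fst_add, Prod.snd_add, Pi.add_apply, mul_add, Finset.sum_add_distrib]
    ring
  map_smul' c p := by
    simp only [Prod.smul_fst, Prod.smul_snd, Pi.smul_apply, smul_eq_mul, RingHom.id_apply,
      mul_add, Finset.mul_sum, mul_left_comm c]

lemma augPairing_apply (y : Fin m → ℝ) (p : (Fin m → ℝ) × ℝ) :
    augPairing y p = ∑ i, y i * p.1 i + p.2 := rfl

lemma continuous_augPairing (y : Fin m → ℝ) : Continuous (augPairing y) :=
  LinearMap.continuous_of_finiteDimensional _

lemma augPairing_phiVec (X : Set (Fin n → ℝ)) (A : Fin m → Fin n → ℝ) (l y : Fin m → ℝ) :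
    augPairing y (phiVec X A l) = phiFun X A l y := rfl

noncomputable def baseWeight (A : Fin m → Fin n → ℝ) (b : Fin m) (x₀ : Fin n → ℝ) : Fin m → ℝ :=
  fun i => dotp (A i) x₀ - if i = b then 1 else 0

section EpiSlice

variable {X : Set (Fin n → ℝ)} {A : Fin m → Fin n → ℝ} {b : Fin m} {x₀ : Fin n → ℝ}
  {p : (Fin m → ℝ) × ℝ}

lemma augPairing_baseWeight :
    augPairing (baseWeight A b x₀) p = (p.2 + ∑ i, p.1 i * dotp (A i) x₀) - p.1 b := by
  simp only [augPairing_apply, baseWeight, sub_mul, ite_mul, one_mul, zero_mul,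
    Finset.sum_sub_distrib, Finset.sum_ite_eq', Finset.mem_univ, if_true, mul_comm (dotp _ _)]
  ring

lemma augPairing_baseWeight_pos (hx₀ : x₀ ∈ X) (hp : p ∈ epiCone X A b) (hp0 : p ≠ 0) :
    0 < augPairing (baseWeight A b x₀) p := by
  have h₀ := hp.2 x₀ hx₀
  rw [augPairing_baseWeight]
  rcases eq_or_ne p.1 0 with h1 | h1
  · have h2 : p.2 ≠ 0 := fun h2 => hp0 (Prod.ext h1 h2)
    simp only [h1, Pi.zero_apply, zero_mul, Finset.sum_const_zero, neg_zero, add_zero,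
      sub_zero] at h₀ ⊢
    exact h₀.lt_of_ne' h2
  · linarith [apply_neg_of_mem_Nbeta hp.1 h1]

lemma isCompact_epiSlice (hx₀ : x₀ ∈ X) :
    IsCompact {q ∈ epiCone X A b | augPairing (baseWeight A b x₀) q = 1} := by
  set C := ∑ i, |dotp (A i) x₀|
  refine (isCompact_univ_pi (fun _ => isCompact_Icc (a := (-1 : ℝ)) (b := 1))).prod
    (isCompact_Icc (a := -C) (b := 1 + C)) |>.of_isClosed_subset
    (isClosed_epiCone.inter (isClosed_eq (continuous_augPairing _) continuous_const)) ?_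
  rintro p ⟨hp, hp1⟩
  rw [augPairing_baseWeight] at hp1
  have h₀ := hp.2 x₀ hx₀
  have hb := apply_nonpos_of_mem_Nbeta hp.1
  have hν : ∀ i, p.1 i ∈ Icc (-1 : ℝ) 1 := by
    intro i
    rcases eq_or_ne i b with rfl | hi
    · constructor <;> linarith
    · constructor <;> linarith [hp.1.1 i hi, le_neg_apply_of_mem_Nbeta hp.1 hi]
  have hS : |∑ i, p.1 i * dotp (A i) x₀| ≤ C :=
    (Finset.abs_sum_le_sum_abs _ _).trans (Finset.sum_le_sum fun i _ => by
      rw [abs_mul]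
      exact mul_le_of_le_one_left (abs_nonneg _) (abs_le.2 (hν i)))
  have := abs_le.1 hS
  exact ⟨fun i _ => hν i, by constructor <;> linarith⟩

end EpiSlice

section ExtremeDirections

variable {X : Set (Fin n → ℝ)} {A : Fin m → Fin n → ℝ} {b : Fin m} {p : (Fin m → ℝ) × ℝ}

lemma snd_eq_of_isExtremeDirection (hX : X.Nonempty) (hp : p ∈ epiCone X A b) (hp1 : p.1 ≠ 0)
    (hext : IsExtremeDirection (epiCone X A b) p) : p.2 = (sigA X A p.1).toReal := by
  have hσ := toReal_sigA_le_of_mem_epiCone hX hp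
  obtain ⟨a, ha⟩ := hext _ (mk_toReal_sigA_mem_epiCone hp.1 (sigA_ne_top_of_mem_epiCone hp))
    (0, p.2 - (sigA X A p.1).toReal) ⟨zero_mem_Nbeta, fun _ _ => by simpa using hσ⟩
    (by ext <;> simp)
  have ha1 : a = 1 :=
    smul_left_injective ℝ hp1 (by simpa using (congrArg Prod.fst ha).symm)
  simpa [ha1] using (congrArg Prod.snd ha).symm

lemma exists_eq_smul_phiVec_of_isExtremeDirection (hX : X.Nonempty) (hp : p ∈ epiCone X A b)
    (hp1 : p.1 ≠ 0) (hext : IsExtremeDirection (epiCone X A b) p) :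
    ∃ c > (0 : ℝ), ∃ l ∈ LambdaB X A b, p = c • phiVec X A l := by
  set c := -p.1 b
  have hc : 0 < c := neg_pos.2 (apply_neg_of_mem_Nbeta hp.1 hp1)
  set l := c⁻¹ • p.1
  have hσp := sigA_ne_top_of_mem_epiCone hp
  have hσl : sigA X A l ≠ ⊤ := by
    rw [sigA_smul hX hσp (inv_pos.2 hc)]; exact EReal.coe_ne_top _
  have hpl : p = c • phiVec X A l := by
    have hcl : p.1 = c • l := (smul_inv_smul₀ hc.ne' p.1).symm
    refine Prod.ext hcl ?_
    rw [snd_eq_of_isExtremeDirection hX hp hp1 hext, hcl, sigA_smul hX hσl hc]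
    rfl
  refine ⟨c, hc, l, ⟨⟨smul_mem_Nbeta hp.1 (inv_nonneg.2 hc.le),
    smul_ne_zero (inv_ne_zero hc.ne') hp1, hσl.lt_top, ?_⟩, ?_⟩, hpl⟩
  · rintro ⟨ν₁, ν₂, θ, hν₁, hν₂, hnp, hθ, hl, haff⟩
    rw [hl] at hσl hpl
    obtain ⟨hσ₁, hσ₂, hsplit⟩ := sigA_ne_top_and_toReal_eq_of_affineOnSeg hX hθ haff hσl
    have hθ' : 0 < 1 - θ := sub_pos.2 hθ.2
    have hq₁ := smul_mem_epiCone (mk_toReal_sigA_mem_epiCone hν₁ hσ₁) (mul_pos hc hθ.1).le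
    have hq₂ := smul_mem_epiCone (mk_toReal_sigA_mem_epiCone hν₂ hσ₂) (mul_pos hc hθ').le
    -- the decomposition of `l` splits `p` inside the cone, so both parts lie on the ray of `p`
    have hsum : (c * θ) • (ν₁, (sigA X A ν₁).toReal) +
        (c * (1 - θ)) • (ν₂, (sigA X A ν₂).toReal) = p := by
      rw [hpl, phiVec, hsplit]
      ext i
      · simp [mul_smul, smul_add]
      · simp only [Prod.snd_add, Prod.smul_snd, smul_eq_mul]
        ring
    obtain ⟨a₁, ha₁⟩ := hext _ hq₁ _ hq₂ hsum
    obtain ⟨a₂, ha₂⟩ := hext _ hq₂ _ hq₁ ((add_comm _ _).trans hsum)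
    have hdir : ∀ {s a : ℝ} {ν : Fin m → ℝ}, 0 < s → s • ν = a • p.1 → ν = (s⁻¹ * a) • p.1 :=
      fun hs h => by rw [mul_smul, ← h, inv_smul_smul₀ hs.ne']
    exact hnp (proportional_of_eq_smul (hdir (mul_pos hc hθ.1) (congrArg Prod.fst ha₁))
      (hdir (mul_pos hc hθ') (congrArg Prod.fst ha₂)))
  · simp [l, c, inv_mul_cancel₀ (neg_ne_zero.1 hc.ne')]

end ExtremeDirections

section CircuitInequalities

variable {X : Set (Fin n → ℝ)} {A : Fin m → Fin n → ℝ} {b : Fin m} {y : Fin m → ℝ}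

lemma augPairing_nonneg_of_mem_epiCone (hX : X.Nonempty)
    (hy : ∀ l ∈ LambdaB X A b, 0 ≤ phiFun X A l y) :
    ∀ p ∈ epiCone X A b, 0 ≤ augPairing y p := by
  obtain ⟨x₀, hx₀⟩ := hX
  refine nonneg_of_nonneg_on_extremeDirections (fun p hp c hc => smul_mem_epiCone hp hc.le)
    convex_epiCone (fun p hp hp0 => augPairing_baseWeight_pos hx₀ hp hp0)
    (isCompact_epiSlice hx₀) (continuous_augPairing y) fun p hp hext => ?_
  rcases eq_or_ne p.1 0 with h1 | h1
  · simpa [augPairing_apply, h1] using hp.2 x₀ hx₀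
  · obtain ⟨c, hc, l, hl, rfl⟩ :=
      exists_eq_smul_phiVec_of_isExtremeDirection ⟨x₀, hx₀⟩ hp h1 hext
    rw [map_smul, augPairing_phiVec, smul_eq_mul]
    exact mul_nonneg hc.le (hy l hl)

/-- For `z` in this set, `Σ c_α exp z_α ≥ e^s Σ c_α exp(αᵀx) ≥ 0` for every `c` in the
`X`-AGE cone at `β`. -/
def dominatingExponents (X : Set (Fin n → ℝ)) (A : Fin m → Fin n → ℝ) (b : Fin m) :
    Set (Fin m → ℝ) :=
  {z | ∃ x ∈ X, ∃ s : ℝ, (∀ i, i ≠ b → dotp (A i) x + s ≤ z i) ∧ z b ≤ dotp (A b) x + s}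

lemma convex_dominatingExponents (hXcv : Convex ℝ X) : Convex ℝ (dominatingExponents X A b) := by
  rintro z ⟨x, hx, s, hz, hzb⟩ z' ⟨x', hx', s', hz', hzb'⟩ a c ha hc hac
  have hlin : ∀ i, dotp (A i) (a • x + c • x') + (a * s + c * s') =
      a * (dotp (A i) x + s) + c * (dotp (A i) x' + s') := fun i => by
    change A i ⬝ᵥ (a • x + c • x') + _ = a * (A i ⬝ᵥ x + s) + c * (A i ⬝ᵥ x' + s')
    rw [dotProduct_add, dotProduct_smul, dotProduct_smul, smul_eq_mul, smul_eq_mul]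
    ring
  refine ⟨a • x + c • x', hXcv hx hx' ha hc hac, a * s + c * s', fun i hi => ?_, ?_⟩
  · rw [hlin]
    simp only [Pi.add_apply, Pi.smul_apply, smul_eq_mul]
    gcongr
    exacts [hz i hi, hz' i hi]
  · rw [hlin]
    simp only [Pi.add_apply, Pi.smul_apply, smul_eq_mul]
    gcongr

lemma nonpos_of_forall_add_mul_lt {a v u : ℝ} (h : ∀ t : ℝ, 0 ≤ t → a + t * v < u) : v ≤ 0 := by
  by_contra! hv
  have := h (|u - a| / v) (by positivity)
  rw [div_mul_cancel₀ _ hv.ne'] at this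
  linarith [le_abs_self (u - a)]

lemma mem_closure_dominatingExponents (hX : X.Nonempty) (hXcv : Convex ℝ X)
    (hy : ∀ p ∈ epiCone X A b, 0 ≤ augPairing y p) : y ∈ closure (dominatingExponents X A b) := by
  obtain ⟨x₀, hx₀⟩ := hX
  by_contra hyW
  obtain ⟨f, u, hf, hfy⟩ := geometric_hahn_banach_closed_point
    (convex_dominatingExponents hXcv).closure isClosed_closure hyW
  -- `f = ⟨c, ·⟩` is bounded above on a set stable under adding multiples of `1`, raising the
  -- coordinates `α ≠ β` and lowering the coordinate `β`; so `-c ∈ N_β` and `(-c, u) ∈ epiCone`.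
  set e : Fin m → Fin m → ℝ := fun i j => if i = j then 1 else 0
  set c : Fin m → ℝ := fun i => f (e i)
  have hfc : ∀ z, f z = ∑ i, z i * c i := fun z => by
    simpa using (f : (Fin m → ℝ) →ₗ[ℝ] ℝ).pi_apply_eq_sum_univ z
  have hW : ∀ x ∈ X, ∀ s : ℝ, ∀ r : Fin m → ℝ, (∀ i, i ≠ b → 0 ≤ r i) → r b ≤ 0 →
      f (fun i => dotp (A i) x) + s * f 1 + f r < u := fun x hx s r hr hrb => by
    have hmem : (fun i => dotp (A i) x) + s • 1 + r ∈ dominatingExponents X A b :=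
      ⟨x, hx, s, fun i hi => by simpa using hr i hi, by simpa using hrb⟩
    simpa using hf _ (subset_closure hmem)
  have hf1 : f 1 = 0 := le_antisymm
    (nonpos_of_forall_add_mul_lt fun t _ => by simpa using hW x₀ hx₀ t 0 (fun _ _ => le_rfl) le_rfl)
    (neg_nonpos.1 <| nonpos_of_forall_add_mul_lt fun t _ => by
      simpa using hW x₀ hx₀ (-t) 0 (fun _ _ => le_rfl) le_rfl)
  have hci : ∀ i, i ≠ b → c i ≤ 0 := fun i hi => nonpos_of_forall_add_mul_lt fun t ht => by
    have := hW x₀ hx₀ 0 (t • e i) (fun j _ => by by_cases h : i = j <;> simp [e, h, ht])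
      (by simp [e, hi])
    simpa [c] using this
  have hcb : 0 ≤ c b := neg_nonpos.1 <| nonpos_of_forall_add_mul_lt fun t ht => by
    have := hW x₀ hx₀ 0 (-t • e b) (fun j hj => by simp [e, Ne.symm hj]) (by simp [e, ht])
    simpa [c] using this
  have hmem : (-c, u) ∈ epiCone X A b := by
    refine ⟨⟨fun i hi => neg_nonneg.2 (hci i hi), ?_⟩, fun x hx => ?_⟩
    · simpa [hfc] using hf1
    · have := hW x hx 0 0 (fun _ _ => le_rfl) le_rfl
      simp only [hfc, zero_mul, add_zero, Pi.zero_apply, Finset.sum_const_zero] at this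
      simpa [mul_comm] using this.le
  have := hy _ hmem
  simp only [augPairing_apply, Pi.neg_apply, mul_neg, Finset.sum_neg_distrib] at this
  linarith [hfc y]

lemma sum_exp_mul_nonneg_of_mem_closure (hy : y ∈ closure (dominatingExponents X A b))
    {c : Fin m → ℝ} (hc : c ∈ AgeCone X A b) : 0 ≤ ∑ i, exp (y i) * c i := by
  rcases le_or_gt 0 (c b) with hcb | hcb
  · refine Finset.sum_nonneg fun i _ => mul_nonneg (exp_pos _).le ?_
    rcases eq_or_ne i b with rfl | hi
    exacts [hcb, hc.1 i hi]
  refine closure_minimal (fun z hz => ?_)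
    (isClosed_le (g := fun z : Fin m → ℝ => ∑ i, exp (z i) * c i) continuous_const (by fun_prop)) hy
  obtain ⟨x, hx, s, hz, hzb⟩ := hz
  have hterm : ∀ i, exp (dotp (A i) x + s) * c i ≤ exp (z i) * c i := fun i => by
    rcases eq_or_ne i b with rfl | hi
    · exact mul_le_mul_of_nonpos_right (exp_le_exp.2 hzb) hcb.le
    · exact mul_le_mul_of_nonneg_right (exp_le_exp.2 (hz i hi)) (hc.1 i hi)
  calc (0 : ℝ) ≤ exp s * ∑ i, c i * exp (dotp (A i) x) := mul_nonneg (exp_pos s).le (hc.2 x hx)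
    _ = ∑ i, exp (dotp (A i) x + s) * c i := by
      rw [Finset.mul_sum]
      exact Finset.sum_congr rfl fun i _ => by rw [exp_add]; ring
    _ ≤ ∑ i, exp (z i) * c i := Finset.sum_le_sum fun i _ => hterm i

end CircuitInequalities

section SageDual

variable {X : Set (Fin n → ℝ)} {A : Fin m → Fin n → ℝ}

lemma zero_mem_AgeCone (b : Fin m) : (0 : Fin m → ℝ) ∈ AgeCone X A b :=
  ⟨fun _ _ => le_rfl, fun _ _ => by simp⟩

lemma mem_dualConeV_Sage_iff {v : Fin m → ℝ} :
    v ∈ dualConeV (Sage X A) ↔ ∀ b, ∀ c ∈ AgeCone X A b, 0 ≤ ∑ i, v i * c i := by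
  constructor
  · intro hv b c hc
    refine hv c ⟨Pi.single b c, fun b' => ?_, by simp⟩
    rcases eq_or_ne b' b with rfl | hb'
    · simpa using hc
    · simpa [hb'] using zero_mem_AgeCone b'
  · rintro hv _ ⟨f, hf, rfl⟩
    simp only [Finset.sum_apply, Finset.mul_sum]
    rw [Finset.sum_comm]
    exact Finset.sum_nonneg fun b _ => hv b _ (hf b)

lemma isClosed_dualConeV (K : Set (Fin m → ℝ)) : IsClosed (dualConeV K) := by
  simp only [dualConeV, ofPred_forall]
  exact isClosed_iInter fun c => isClosed_iInter fun _ => isClosed_le continuous_const (by fun_prop)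

lemma add_smul_mem_dualConeV {K : Set (Fin m → ℝ)} {v w : Fin m → ℝ} (hv : v ∈ dualConeV K)
    (hw : w ∈ dualConeV K) {ε : ℝ} (hε : 0 ≤ ε) : v + ε • w ∈ dualConeV K := fun c hc => by
  have := add_nonneg (hv c hc) (mul_nonneg hε (hw c hc))
  simpa [add_mul, Finset.sum_add_distrib, Finset.mul_sum, mul_assoc] using this

lemma exp_dotp_mem_dualConeV_Sage {x₀ : Fin n → ℝ} (hx₀ : x₀ ∈ X) :
    (fun i => exp (dotp (A i) x₀)) ∈ dualConeV (Sage X A) :=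
  mem_dualConeV_Sage_iff.2 fun _ _ hc => by simpa [mul_comm] using hc.2 x₀ hx₀

lemma nonneg_of_mem_dualConeV_Sage {v : Fin m → ℝ} (hv : v ∈ dualConeV (Sage X A)) (i : Fin m) :
    0 ≤ v i := by
  have hc : Pi.single i 1 ∈ AgeCone X A i :=
    ⟨fun j hj => by simp [hj], fun x _ => by simp [Pi.single_apply, (exp_pos _).le]⟩
  simpa [Pi.single_apply] using mem_dualConeV_Sage_iff.1 hv i _ hc

lemma dualConeV_Sage_subset_closure_pos (hX : X.Nonempty) :
    dualConeV (Sage X A) ⊆ closure {w | w ∈ dualConeV (Sage X A) ∧ ∀ i, 0 < w i} := by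
  obtain ⟨x₀, hx₀⟩ := hX
  intro v hv
  have hlim : Tendsto (fun ε : ℝ => v + ε • fun i => exp (dotp (A i) x₀)) (𝓝[>] 0) (𝓝 v) :=
    tendsto_nhdsWithin_of_tendsto_nhds (Continuous.tendsto' (by fun_prop) _ _ (by simp))
  refine mem_closure_of_tendsto hlim (eventually_nhdsWithin_of_forall fun ε hε =>
    ⟨add_smul_mem_dualConeV hv (exp_dotp_mem_dualConeV_Sage hx₀) (le_of_lt hε), fun i => ?_⟩)
  have := nonneg_of_mem_dualConeV_Sage hv i
  have : 0 < ε * exp (dotp (A i) x₀) := mul_pos hε (exp_pos _)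
  simp only [Pi.add_apply, Pi.smul_apply, smul_eq_mul]
  linarith

end SageDual

section Certificate

variable {X : Set (Fin n → ℝ)} {A : Fin m → Fin n → ℝ} {b : Fin m} {l : Fin m → ℝ}

noncomputable def ageCertificate (X : Set (Fin n → ℝ)) (A : Fin m → Fin n → ℝ) (b : Fin m)
    (l y : Fin m → ℝ) : Fin m → ℝ :=
  fun i => if i = b then -exp (-phiFun X A l y - y b) else l i * exp (-y i)

/-- Weighted AM–GM with the weights `l_α` (`α ≠ β`), which sum to `1`. -/
lemma ageCertificate_mem_AgeCone (hl : l ∈ LambdaB X A b) (y : Fin m → ℝ) :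
    ageCertificate X A b l y ∈ AgeCone X A b := by
  obtain ⟨⟨hlN, -, hlσ, -⟩, hlb⟩ := hl
  have hw : ∑ i ∈ Finset.univ.erase b, l i = 1 := by
    rw [sum_erase_eq_neg_of_mem_Nbeta hlN, hlb, neg_neg]
  refine ⟨fun i hi => ?_, fun x hx => ?_⟩
  · simp only [ageCertificate, if_neg hi]
    exact mul_nonneg (hlN.1 i hi) (exp_pos _).le
  set q : Fin m → ℝ := fun i => dotp (A i) x - y i
  have hamgm : exp (∑ i ∈ Finset.univ.erase b, l i * q i) ≤
      ∑ i ∈ Finset.univ.erase b, l i * exp (q i) := by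
    simpa using convexOn_exp.map_sum_le (fun i hi => hlN.1 i (Finset.ne_of_mem_erase hi)) hw
      (fun i _ => mem_univ (q i))
  have hexponent : -phiFun X A l y - y b + dotp (A b) x ≤
      ∑ i ∈ Finset.univ.erase b, l i * q i := by
    have h1 := neg_sum_le_toReal_sigA hlσ.ne hx
    have h2 := Finset.add_sum_erase Finset.univ (fun i => l i * q i) (Finset.mem_univ b)
    simp only [q, hlb, mul_sub, Finset.sum_sub_distrib] at h2
    simp only [phiFun, q, mul_sub, Finset.sum_sub_distrib, mul_comm (y _)]
    linarith
  have hsplit : ∑ i, ageCertificate X A b l y i * exp (dotp (A i) x) =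
      ∑ i ∈ Finset.univ.erase b, l i * exp (q i) -
        exp (-phiFun X A l y - y b + dotp (A b) x) := by
    rw [← Finset.add_sum_erase _ _ (Finset.mem_univ b), Finset.sum_congr rfl fun i hi => by
      rw [ageCertificate, if_neg (Finset.ne_of_mem_erase hi), mul_assoc, ← exp_add,
        neg_add_eq_sub]]
    simp only [ageCertificate, if_pos, exp_add]
    ring
  rw [hsplit, sub_nonneg]
  exact (exp_le_exp.2 hexponent).trans hamgm

lemma sum_exp_mul_ageCertificate (hl : l ∈ LambdaB X A b) (y : Fin m → ℝ) :
    ∑ i, exp (y i) * ageCertificate X A b l y i = 1 - exp (-phiFun X A l y) := by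
  obtain ⟨⟨hlN, -⟩, hlb⟩ := hl
  rw [← Finset.add_sum_erase _ _ (Finset.mem_univ b), Finset.sum_congr rfl fun i hi => by
    rw [ageCertificate, if_neg (Finset.ne_of_mem_erase hi), mul_left_comm, ← exp_add,
      add_neg_cancel, exp_zero, mul_one], sum_erase_eq_neg_of_mem_Nbeta hlN, hlb]
  simp only [ageCertificate, if_pos, mul_neg, ← exp_add]
  ring_nf

end Certificate

section ConeHull

variable {E : Type*} [AddCommGroup E] [Module ℝ E] {S : Set E}

lemma subset_coneHull : S ⊆ coneHull S :=
  fun s hs => ⟨1, fun _ => 1, fun _ => s, fun _ => zero_le_one, fun _ => hs, by simp⟩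

lemma nonneg_on_coneHull {f : E →ₗ[ℝ] ℝ} (hf : ∀ s ∈ S, 0 ≤ f s) : ∀ x ∈ coneHull S, 0 ≤ f x := by
  rintro _ ⟨k, t, v, ht, hv, rfl⟩
  simpa only [map_sum, map_smul, smul_eq_mul] using
    Finset.sum_nonneg fun j _ => mul_nonneg (ht j) (hf _ (hv j))

end ConeHull

section Main

variable {X : Set (Fin n → ℝ)} {A : Fin m → Fin n → ℝ} {y : Fin m → ℝ}

lemma mk_one_mem_dualConeP_circuitGraph_iff :
    (y, (1 : ℝ)) ∈ dualConeP (circuitGraph X A) ↔ ∀ l ∈ Lambda X A, 0 ≤ phiFun X A l y := by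
  have hpair : ∀ q, ∑ i, (y, (1 : ℝ)).1 i * q.1 i + (y, (1 : ℝ)).2 * q.2 = augPairing y q :=
    fun q => by rw [one_mul]; rfl
  simp only [dualConeP, hpair, mem_ofPred_eq]
  refine ⟨fun h l hl => ?_, fun h => nonneg_on_coneHull ?_⟩
  · rw [← augPairing_phiVec]
    exact h _ (subset_coneHull (Or.inl (mem_image_of_mem _ hl)))
  · rintro _ (⟨l, hl, rfl⟩ | rfl)
    · exact h l hl
    · simp [augPairing_apply]

lemma exp_mem_dualConeV_Sage_iff (hX : X.Nonempty) (hXcv : Convex ℝ X) :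
    (fun i => exp (y i)) ∈ dualConeV (Sage X A) ↔ (y, (1 : ℝ)) ∈ dualConeP (circuitGraph X A) := by
  simp only [mk_one_mem_dualConeP_circuitGraph_iff, mem_dualConeV_Sage_iff, Lambda, mem_iUnion]
  constructor
  · rintro h l ⟨b, hl⟩
    have := h b _ (ageCertificate_mem_AgeCone hl y)
    rw [sum_exp_mul_ageCertificate hl, sub_nonneg, exp_le_one_iff] at this
    linarith
  · exact fun h b c => sum_exp_mul_nonneg_of_mem_closure (mem_closure_dominatingExponents hX hXcv
      (augPairing_nonneg_of_mem_epiCone hX fun l hl => h l ⟨b, hl⟩))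

end Main

theorem statement8_general {n m : ℕ} (X : Set (Fin n → ℝ)) (hXne : X.Nonempty)
    (hXcv : Convex ℝ X) (A : Fin m → Fin n → ℝ) :
    dualConeV (Sage X A) =
      closure {v : Fin m → ℝ | ∃ y : Fin m → ℝ,
        (y, (1:ℝ)) ∈ dualConeP (circuitGraph X A) ∧ v = fun i => Real.exp (y i)} := by
  have hpos : {w | w ∈ dualConeV (Sage X A) ∧ ∀ i, 0 < w i} = {v | ∃ y : Fin m → ℝ,
      (y, (1:ℝ)) ∈ dualConeP (circuitGraph X A) ∧ v = fun i => Real.exp (y i)} := by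
    ext w
    constructor
    · rintro ⟨hw, hw0⟩
      have hlog : (fun i => exp (log (w i))) = w := funext fun i => exp_log (hw0 i)
      exact ⟨fun i => log (w i), (exp_mem_dualConeV_Sage_iff hXne hXcv).1 (by rwa [hlog]),
        hlog.symm⟩
    · rintro ⟨y, hy, rfl⟩
      exact ⟨(exp_mem_dualConeV_Sage_iff hXne hXcv).2 hy, fun i => exp_pos _⟩
  rw [← hpos]
  exact (dualConeV_Sage_subset_closure_pos hXne).antisymm
    (closure_minimal (fun w hw => hw.1) (isClosed_dualConeV _))

theorem statement8 {n m : ℕ} (X : Set (Fin n → ℝ)) (hXne : X.Nonempty) (hXcl : IsClosed X)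
    (hXcv : Convex ℝ X) (A : Fin m → Fin n → ℝ) (hA : Function.Injective A) (hm : 0 < m) :
    dualConeV (Sage X A) =
      closure {v : Fin m → ℝ | ∃ y : Fin m → ℝ,
        (y, (1:ℝ)) ∈ dualConeP (circuitGraph X A) ∧ v = fun i => Real.exp (y i)} :=
  statement8_general X hXne hXcv A
end

section
/- Assume the functions {x ↦ exp(αᵀx)}_{α∈𝒜} are linearly independent on X (equivalently, the moment cone cone{(exp(αᵀx))_{α∈𝒜} : x ∈ X} ⊆ ℝ^𝒜 is full-dimensional). Then the closure of the circuit graph G_X(𝒜) contains no lines; i.e., cl(G_X(𝒜)) ∩ (−cl(G_X(𝒜))) = {0}. -/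
open Finset

section AuxCircuitGraph

lemma dotp_Amap' {n m : ℕ} (A : Fin m → Fin n → ℝ) (ν : Fin m → ℝ) (x : Fin n → ℝ) :
    dotp (Amap A ν) x = ∑ i, ν i * dotp (A i) x := by
  simp only [dotp, Amap, Finset.sum_mul, Finset.mul_sum, mul_assoc]
  exact Finset.sum_comm

lemma dotp_neg' {n : ℕ} (y x : Fin n → ℝ) : dotp (-y) x = -dotp y x := by
  simp [dotp]

lemma sig_toReal_ge' {n m : ℕ} {X : Set (Fin n → ℝ)} {A : Fin m → Fin n → ℝ}
    {ν : Fin m → ℝ} {x : Fin n → ℝ} (hx : x ∈ X) (htop : sigA X A ν ≠ ⊤) :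
    -(∑ i, ν i * dotp (A i) x) ≤ (sigA X A ν).toReal := by
  have h1 : ((dotp (-(Amap A ν)) x : ℝ) : EReal) ≤ sigA X A ν :=
    le_iSup₂ (f := fun x (_ : x ∈ X) => ((dotp (-(Amap A ν)) x : ℝ) : EReal)) x hx
  have hbot : sigA X A ν ≠ ⊥ := by
    intro h
    rw [h] at h1
    exact absurd h1 (by simp)
  rw [← EReal.coe_toReal htop hbot] at h1
  rw [dotp_neg', dotp_Amap'] at h1
  exact_mod_cast h1

lemma coord_bound' {m : ℕ} (b : Fin m) (l : Fin m → ℝ) (h1 : l b = -1)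
    (h2 : ∀ i, i ≠ b → 0 ≤ l i) (h3 : ∑ i, l i = 0) : ∀ i, |l i| ≤ 1 := by
  intro i
  have hsum1 : ∑ j ∈ Finset.univ.erase b, l j = 1 := by
    have := Finset.sum_erase_add Finset.univ l (Finset.mem_univ b)
    rw [h3, h1] at this
    linarith
  by_cases hib : i = b
  · rw [hib, h1]; norm_num
  · have h0 : 0 ≤ l i := h2 i hib
    have hle : l i ≤ 1 := by
      have := Finset.single_le_sum (f := l)
        (fun j hj => h2 j (Finset.mem_erase.mp hj).1)
        (Finset.mem_erase.mpr ⟨hib, Finset.mem_univ i⟩)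
      rw [hsum1] at this
      exact this
    rw [abs_of_nonneg h0]; exact hle

lemma exists_spanning_finset' {n m : ℕ} (X : Set (Fin n → ℝ)) (A : Fin m → Fin n → ℝ)
    (hm : 0 < m) (hLI : ExpLinIndep X A) :
    ∃ K : Finset (Fin n → ℝ), ↑K ⊆ X ∧ K.Nonempty ∧
      ∀ d : Fin m → ℝ, (∀ x ∈ K, ∑ i, d i * Real.exp (dotp (A i) x) = 0) → d = 0 := by
  classical
  set ℓ : (Fin n → ℝ) → ((Fin m → ℝ) →ₗ[ℝ] ℝ) :=
    fun x => ∑ i, Real.exp (dotp (A i) x) • (LinearMap.proj i) with hℓ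
  have hℓapp : ∀ x d, ℓ x d = ∑ i, d i * Real.exp (dotp (A i) x) := by
    intro x d
    simp [hℓ, mul_comm]
  set SK : Finset (Fin n → ℝ) → Submodule ℝ (Fin m → ℝ) :=
    fun K => ⨅ x ∈ K, LinearMap.ker (ℓ x) with hSK
  have hmem : ∀ K d, d ∈ SK K ↔ ∀ x ∈ K, ∑ i, d i * Real.exp (dotp (A i) x) = 0 := by
    intro K d
    simp [hSK, Submodule.mem_iInf, LinearMap.mem_ker, hℓapp]
  set R : Set ℕ := {r | ∃ K : Finset (Fin n → ℝ), ↑K ⊆ X ∧ Module.finrank ℝ (SK K) = r} with hR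
  have hRne : R.Nonempty := ⟨_, ∅, by simp, rfl⟩
  obtain ⟨K₀, hK₀X, hK₀r⟩ := Nat.sInf_mem hRne
  have hbotK : SK K₀ = ⊥ := by
    by_contra hne
    obtain ⟨d, hd, hd0⟩ := Submodule.exists_mem_ne_zero_of_ne_bot hne
    have hex : ∃ x ∈ X, ∑ i, d i * Real.exp (dotp (A i) x) ≠ 0 := by
      by_contra hall
      push_neg at hall
      have hz : ∑ i, d i • (fun x : X => Real.exp (dotp (A i) (x : Fin n → ℝ))) = 0 := by
        funext x
        simpa [Finset.sum_apply] using hall x x.2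
      have := linearIndependent_iff'.mp hLI Finset.univ d hz
      exact hd0 (funext fun i => this i (Finset.mem_univ i))
    obtain ⟨x, hxX, hxne⟩ := hex
    have hle : SK (insert x K₀) ≤ SK K₀ := by
      intro u hu
      rw [hmem] at hu ⊢
      exact fun y hy => hu y (Finset.mem_insert_of_mem hy)
    have hlt : SK (insert x K₀) < SK K₀ := by
      refine lt_of_le_of_ne hle ?_
      intro heq
      have : d ∈ SK (insert x K₀) := heq ▸ hd
      rw [hmem] at this
      exact hxne (this x (Finset.mem_insert_self x K₀))
    have h1 : Module.finrank ℝ (SK (insert x K₀)) < Module.finrank ℝ (SK K₀) :=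
      Submodule.finrank_lt_finrank_of_lt hlt
    have h2 : sInf R ≤ Module.finrank ℝ (SK (insert x K₀)) :=
      Nat.sInf_le ⟨insert x K₀, by
        rw [Finset.coe_insert]
        exact Set.insert_subset hxX hK₀X, rfl⟩
    omega
  have hK₀ne : K₀.Nonempty := by
    rcases K₀.eq_empty_or_nonempty with h | h
    · exfalso
      have : ((fun _ => (1:ℝ)) : Fin m → ℝ) ∈ SK K₀ := by
        rw [hmem]
        intro x hx
        rw [h] at hx
        simp at hx
      rw [hbotK] at this
      have h1 : ((fun _ => (1:ℝ)) : Fin m → ℝ) = 0 := this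
      have := congrFun h1 ⟨0, hm⟩
      norm_num at this
    · exact h
  refine ⟨K₀, hK₀X, hK₀ne, fun d hd => ?_⟩
  have : d ∈ SK K₀ := (hmem K₀ d).mpr hd
  rw [hbotK] at this
  exact this

lemma exists_good_w' {n m : ℕ} (X : Set (Fin n → ℝ)) (A : Fin m → Fin n → ℝ)
    (K : Finset (Fin n → ℝ)) (hKX : ↑K ⊆ X) (hKne : K.Nonempty)
    (hKsp : ∀ d : Fin m → ℝ, (∀ x ∈ K, ∑ i, d i * Real.exp (dotp (A i) x) = 0) → d = 0) :
    ∃ w : Fin m → ℝ, ∀ (b : Fin m) (l : Fin m → ℝ), l b = -1 → (∀ i, i ≠ b → 0 ≤ l i) →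
      (∑ i, l i = 0) → ∃ x ∈ X, 0 < (∑ i, w i * l i) - ∑ i, l i * dotp (A i) x := by
  classical
  set c : Fin m → ℝ := fun i => ∑ x ∈ K, Real.exp (dotp (A i) x) with hc
  have hcpos : ∀ i, 0 < c i := fun i =>
    Finset.sum_pos (fun x _ => Real.exp_pos _) hKne
  refine ⟨fun i => Real.log (c i), ?_⟩
  intro b l hlb hlnn hlsum
  by_contra hcon
  push_neg at hcon
  set w : Fin m → ℝ := fun i => Real.log (c i) with hw
  have hsum1 : ∑ i ∈ Finset.univ.erase b, l i = 1 := by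
    have := Finset.sum_erase_add Finset.univ l (Finset.mem_univ b)
    rw [hlsum, hlb] at this
    linarith
  have hkey : ∀ x ∈ K, dotp (A b) x - w b ≤
      ∑ i ∈ Finset.univ.erase b, l i * (dotp (A i) x - w i) := by
    intro x hx
    have h0 := hcon x (hKX hx)
    have h1 : ∑ i, w i * l i ≤ ∑ i, l i * dotp (A i) x := by linarith
    have hsplit : ∀ f : Fin m → ℝ, ∑ i, f i = (∑ i ∈ Finset.univ.erase b, f i) + f b :=
      fun f => (Finset.sum_erase_add Finset.univ f (Finset.mem_univ b)).symm
    have e1 := hsplit (fun i => w i * l i)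
    have e2 := hsplit (fun i => l i * dotp (A i) x)
    simp only [hlb] at e1 e2
    have : ∑ i ∈ Finset.univ.erase b, l i * (dotp (A i) x - w i)
        = (∑ i ∈ Finset.univ.erase b, l i * dotp (A i) x)
          - ∑ i ∈ Finset.univ.erase b, w i * l i := by
      rw [← Finset.sum_sub_distrib]
      exact Finset.sum_congr rfl fun i _ => by ring
    rw [this]
    have hb1 : (∑ i ∈ Finset.univ.erase b, w i * l i) = (∑ i, w i * l i) + w b := by
      rw [e1]; ring
    have hb2 : (∑ i ∈ Finset.univ.erase b, l i * dotp (A i) x)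
        = (∑ i, l i * dotp (A i) x) + dotp (A b) x := by
      rw [e2]; ring
    rw [hb1, hb2]
    linarith
  have hjen : ∀ x ∈ K, Real.exp (dotp (A b) x) / c b ≤
      ∑ i ∈ Finset.univ.erase b, l i * (Real.exp (dotp (A i) x) / c i) := by
    intro x hx
    have hconv := convexOn_exp.map_sum_le (t := Finset.univ.erase b) (w := l)
      (p := fun i => dotp (A i) x - w i)
      (fun i hi => hlnn i (Finset.mem_erase.mp hi).1) hsum1
      (fun i _ => Set.mem_univ _)
    have hmono := Real.exp_le_exp.mpr (hkey x hx)
    have hrw : ∀ i, Real.exp (dotp (A i) x - w i) = Real.exp (dotp (A i) x) / c i := by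
      intro i
      rw [Real.exp_sub, hw, Real.exp_log (hcpos i)]
    calc Real.exp (dotp (A b) x) / c b = Real.exp (dotp (A b) x - w b) := (hrw b).symm
      _ ≤ Real.exp (∑ i ∈ Finset.univ.erase b, l i * (dotp (A i) x - w i)) := hmono
      _ ≤ ∑ i ∈ Finset.univ.erase b, l i * Real.exp (dotp (A i) x - w i) := by
          simpa [smul_eq_mul] using hconv
      _ = ∑ i ∈ Finset.univ.erase b, l i * (Real.exp (dotp (A i) x) / c i) :=
          Finset.sum_congr rfl fun i _ => by rw [hrw i]
  set q : (Fin n → ℝ) → ℝ := fun x =>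
    ∑ i ∈ Finset.univ.erase b, l i * (Real.exp (dotp (A i) x) / c i)
      - Real.exp (dotp (A b) x) / c b with hq
  have hqnn : ∀ x ∈ K, 0 ≤ q x := fun x hx => by
    have := hjen x hx
    simp only [hq]
    linarith
  have hqsum : ∑ x ∈ K, q x = 0 := by
    simp only [hq, Finset.sum_sub_distrib]
    rw [Finset.sum_comm]
    have hci : ∀ i, ∑ x ∈ K, Real.exp (dotp (A i) x) = c i := fun i => rfl
    have h1 : ∀ i, ∑ x ∈ K, l i * (Real.exp (dotp (A i) x) / c i) = l i := by
      intro i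
      rw [← Finset.mul_sum, ← Finset.sum_div]
      rw [hci i, div_self (ne_of_gt (hcpos i)), mul_one]
    have h2 : ∑ x ∈ K, Real.exp (dotp (A b) x) / c b = 1 := by
      rw [← Finset.sum_div, hci b, div_self (ne_of_gt (hcpos b))]
    rw [h2]
    rw [Finset.sum_congr rfl fun i _ => h1 i, hsum1]
    ring
  have hq0 : ∀ x ∈ K, q x = 0 := by
    intro x hx
    exact (Finset.sum_eq_zero_iff_of_nonneg hqnn).mp hqsum x hx
  set d : Fin m → ℝ := fun i => if i = b then (-1) / c b else l i / c i with hd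
  have hdz : d = 0 := by
    apply hKsp
    intro x hx
    have : ∑ i, d i * Real.exp (dotp (A i) x)
        = (∑ i ∈ Finset.univ.erase b, d i * Real.exp (dotp (A i) x))
          + d b * Real.exp (dotp (A b) x) :=
      (Finset.sum_erase_add Finset.univ _ (Finset.mem_univ b)).symm
    rw [this]
    have hqx := hq0 x hx
    simp only [hq] at hqx
    have e1 : ∑ i ∈ Finset.univ.erase b, d i * Real.exp (dotp (A i) x)
        = ∑ i ∈ Finset.univ.erase b, l i * (Real.exp (dotp (A i) x) / c i) := by
      refine Finset.sum_congr rfl fun i hi => ?_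
      have hib := (Finset.mem_erase.mp hi).1
      simp only [hd, if_neg hib]
      ring
    rw [e1]
    simp only [hd, if_pos rfl]
    have : (-1) / c b * Real.exp (dotp (A b) x) = -(Real.exp (dotp (A b) x) / c b) := by
      ring
    rw [this]
    linarith
  have := congrFun hdz b
  simp only [hd, if_pos rfl, Pi.zero_apply] at this
  rw [div_eq_zero_iff] at this
  rcases this with h | h
  · norm_num at h
  · exact absurd h (ne_of_gt (hcpos b))

lemma exists_delta' {n m : ℕ} (X : Set (Fin n → ℝ)) (A : Fin m → Fin n → ℝ) (w : Fin m → ℝ)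
    (hw : ∀ (b : Fin m) (l : Fin m → ℝ), l b = -1 → (∀ i, i ≠ b → 0 ≤ l i) →
      (∑ i, l i = 0) → ∃ x ∈ X, 0 < (∑ i, w i * l i) - ∑ i, l i * dotp (A i) x) :
    ∃ δ : ℝ, 0 < δ ∧ ∀ (b : Fin m) (l : Fin m → ℝ), l b = -1 → (∀ i, i ≠ b → 0 ≤ l i) →
      (∑ i, l i = 0) → ∃ x ∈ X, δ ≤ (∑ i, w i * l i) - ∑ i, l i * dotp (A i) x := by
  classical
  set Sb : Fin m → Set (Fin m → ℝ) :=
    fun b => {l | l b = -1 ∧ (∀ i, i ≠ b → 0 ≤ l i) ∧ ∑ i, l i = 0} with hSb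
  set S : Set (Fin m → ℝ) := ⋃ b, Sb b with hS
  have hnorm : ∀ l ∈ S, ∀ i, |l i| ≤ 1 := by
    intro l hl i
    obtain ⟨b, hb⟩ := Set.mem_iUnion.mp hl
    obtain ⟨h1, h2, h3⟩ := hb
    exact coord_bound' b l h1 h2 h3 i
  have hScomp : IsCompact S := by
    rw [hS]
    apply isCompact_iUnion
    intro b
    apply IsCompact.of_isClosed_subset (isCompact_closedBall (0 : Fin m → ℝ) 1)
    · have hcl1 : IsClosed {l : Fin m → ℝ | l b = -1} :=
        isClosed_eq (continuous_apply b) continuous_const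
      have hcl2 : IsClosed {l : Fin m → ℝ | ∀ i, i ≠ b → 0 ≤ l i} := by
        have : {l : Fin m → ℝ | ∀ i, i ≠ b → 0 ≤ l i}
            = ⋂ i, {l : Fin m → ℝ | i ≠ b → 0 ≤ l i} := by
          ext l; simp
        rw [this]
        apply isClosed_iInter
        intro i
        by_cases hib : i = b
        · have : {l : Fin m → ℝ | i ≠ b → 0 ≤ l i} = Set.univ := by
            ext l; simp [hib]
          rw [this]; exact isClosed_univ
        · have : {l : Fin m → ℝ | i ≠ b → 0 ≤ l i} = {l : Fin m → ℝ | 0 ≤ l i} := by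
            ext l; simp [hib]
          rw [this]
          exact isClosed_le continuous_const (continuous_apply i)
      have hcl3 : IsClosed {l : Fin m → ℝ | ∑ i, l i = 0} :=
        isClosed_eq (by continuity) continuous_const
      have : Sb b = {l : Fin m → ℝ | l b = -1} ∩ ({l | ∀ i, i ≠ b → 0 ≤ l i}
          ∩ {l | ∑ i, l i = 0}) := by
        ext l; simp [hSb, Set.mem_setOf_eq, and_assoc]
      rw [this]
      exact hcl1.inter (hcl2.inter hcl3)
    · intro l hl
      rw [Metric.mem_closedBall, dist_zero_right]
      rw [pi_norm_le_iff_of_nonneg (by norm_num)]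
      intro i
      rw [Real.norm_eq_abs]
      exact hnorm l (Set.mem_iUnion.mpr ⟨b, hl⟩) i
  rcases Set.eq_empty_or_nonempty S with hSe | hSne
  · refine ⟨1, one_pos, fun b l h1 h2 h3 => ?_⟩
    exfalso
    have : l ∈ S := Set.mem_iUnion.mpr ⟨b, h1, h2, h3⟩
    rw [hSe] at this
    exact this
  · set f : (Fin n → ℝ) → (Fin m → ℝ) → ℝ :=
      fun x l => (∑ i, w i * l i) - ∑ i, l i * dotp (A i) x with hf
    have hfc : ∀ x, Continuous (f x) := by
      intro x
      apply Continuous.sub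
      · exact continuous_finset_sum _ fun i _ => continuous_const.mul (continuous_apply i)
      · exact continuous_finset_sum _ fun i _ => (continuous_apply i).mul continuous_const
    set U : ({x // x ∈ X} × {e : ℝ // 0 < e}) → Set (Fin m → ℝ) :=
      fun p => {l | p.2.1 < f p.1.1 l} with hU
    have hUo : ∀ p, IsOpen (U p) := fun p => isOpen_lt continuous_const (hfc _)
    have hcov : S ⊆ ⋃ p, U p := by
      intro l hl
      obtain ⟨b, h1, h2, h3⟩ := Set.mem_iUnion.mp hl
      obtain ⟨x, hxX, hxpos⟩ := hw b l h1 h2 h3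
      refine Set.mem_iUnion.mpr ⟨⟨⟨x, hxX⟩, ⟨(f x l) / 2, by simpa [hf] using half_pos hxpos⟩⟩, ?_⟩
      simp only [hU, Set.mem_setOf_eq]
      simpa [hf] using half_lt_self hxpos
    obtain ⟨t, ht⟩ := hScomp.elim_finite_subcover U hUo hcov
    have htne : t.Nonempty := by
      obtain ⟨l, hl⟩ := hSne
      have := ht hl
      rw [Set.mem_iUnion₂] at this
      obtain ⟨p, hp, _⟩ := this
      exact ⟨p, hp⟩
    set δ : ℝ := (t.image fun p => p.2.1).min' (htne.image _) with hδ
    have hδpos : 0 < δ := by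
      have := (t.image fun p => p.2.1).min'_mem (htne.image _)
      rw [Finset.mem_image] at this
      obtain ⟨p, _, hpe⟩ := this
      rw [hδ, ← hpe]
      exact p.2.2
    refine ⟨δ, hδpos, fun b l h1 h2 h3 => ?_⟩
    have hlS : l ∈ S := Set.mem_iUnion.mpr ⟨b, h1, h2, h3⟩
    have := ht hlS
    rw [Set.mem_iUnion₂] at this
    obtain ⟨p, hpt, hpl⟩ := this
    refine ⟨p.1.1, p.1.2, ?_⟩
    have hd : δ ≤ p.2.1 :=
      Finset.min'_le _ _ (Finset.mem_image.mpr ⟨p, hpt, rfl⟩)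
    have hlt : p.2.1 < f p.1.1 l := hpl
    calc δ ≤ p.2.1 := hd
      _ ≤ _ := le_of_lt hlt

end AuxCircuitGraph

theorem statement14 {n m : ℕ} (X : Set (Fin n → ℝ)) (hXne : X.Nonempty) (hXcl : IsClosed X)
    (hXcv : Convex ℝ X) (A : Fin m → Fin n → ℝ) (hA : Function.Injective A) (hm : 0 < m)
    (hLI : ExpLinIndep X A) :
    closure (circuitGraph X A) ∩ (-(closure (circuitGraph X A))) = {0} := by
  classical
  obtain ⟨K, hKX, hKne, hKsp⟩ := exists_spanning_finset' X A hm hLI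
  obtain ⟨w, hw⟩ := exists_good_w' X A K hKX hKne hKsp
  obtain ⟨δ, hδpos, hδ⟩ := exists_delta' X A w hw
  set B : ℝ := ∑ i, |w i| with hB
  have hB0 : 0 ≤ B := Finset.sum_nonneg fun i _ => abs_nonneg _
  set C : ℝ := 1 + (1 + B) / δ with hC
  have hC1 : 1 ≤ C := by
    have : 0 ≤ (1 + B) / δ := div_nonneg (by linarith) hδpos.le
    rw [hC]
    linarith
  -- the separating linear functional
  set L : ((Fin m → ℝ) × ℝ) →ₗ[ℝ] ℝ :=
    { toFun := fun p => (∑ i, w i * p.1 i) + p.2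
      map_add' := by
        intro p q
        simp only [Prod.fst_add, Prod.snd_add, Pi.add_apply, mul_add,
          Finset.sum_add_distrib]
        ring
      map_smul' := by
        intro r p
        simp only [Prod.smul_fst, Prod.smul_snd, Pi.smul_apply, smul_eq_mul,
          RingHom.id_apply]
        rw [mul_add, Finset.mul_sum]
        congr 1
        exact Finset.sum_congr rfl fun i _ => by ring } with hL
  have hLapp : ∀ p : (Fin m → ℝ) × ℝ, L p = (∑ i, w i * p.1 i) + p.2 := fun p => rfl
  have hLcont : Continuous fun p : (Fin m → ℝ) × ℝ => L p := by
    simp only [hLapp]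
    apply Continuous.add
    · exact continuous_finset_sum _ fun i _ =>
        continuous_const.mul ((continuous_apply i).comp continuous_fst)
    · exact continuous_snd
  -- bound on generators
  have hgen : ∀ v ∈ (phiVec X A '' Lambda X A) ∪ {((0 : Fin m → ℝ), (1 : ℝ))},
      ‖v‖ ≤ C * L v := by
    rintro v (⟨l, hl, rfl⟩ | hv)
    · obtain ⟨b, hb⟩ := Set.mem_iUnion.mp hl
      obtain ⟨⟨⟨hlnn, hlsum⟩, hlne, hltop, _⟩, hlb⟩ := hb
      obtain ⟨x, hxX, hxδ⟩ := hδ b l hlb hlnn hlsum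
      have hsig : -(∑ i, l i * dotp (A i) x) ≤ (sigA X A l).toReal :=
        sig_toReal_ge' hxX hltop.ne
      set σr : ℝ := (sigA X A l).toReal with hσr
      have hLv : L (phiVec X A l) = (∑ i, w i * l i) + σr := rfl
      have hLδ : δ ≤ L (phiVec X A l) := by
        rw [hLv]
        linarith
      have habs : |∑ i, w i * l i| ≤ B := by
        calc |∑ i, w i * l i| ≤ ∑ i, |w i * l i| := Finset.abs_sum_le_sum_abs _ _
          _ ≤ ∑ i, |w i| := Finset.sum_le_sum fun i _ => by
              rw [abs_mul]
              calc |w i| * |l i| ≤ |w i| * 1 :=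
                    mul_le_mul_of_nonneg_left (coord_bound' b l hlb hlnn hlsum i)
                      (abs_nonneg _)
                _ = |w i| := mul_one _
          _ = B := rfl
      obtain ⟨habs1, habs2⟩ := abs_le.mp habs
      have hσabs : |σr| ≤ L (phiVec X A l) + B := by
        rw [hLv]
        rw [abs_le]
        constructor <;> linarith
      have hkey : (1 + B) / δ * δ ≤ (1 + B) / δ * L (phiVec X A l) :=
        mul_le_mul_of_nonneg_left hLδ (div_nonneg (by linarith) hδpos.le)
      have hkey2 : (1 + B) / δ * δ = 1 + B := div_mul_cancel₀ _ (ne_of_gt hδpos)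
      have hCL : L (phiVec X A l) + B ≤ C * L (phiVec X A l) ∧
          1 ≤ C * L (phiVec X A l) := by
        have hP : 1 + B ≤ (1 + B) / δ * L (phiVec X A l) := by
          have h' := hkey
          rw [hkey2] at h'
          exact h' 
        constructor
        · rw [hC]; nlinarith
        · rw [hC]; nlinarith
      rw [Prod.norm_def]
      apply max_le
      · have h1 : ‖(phiVec X A l).1‖ ≤ 1 := by
          rw [pi_norm_le_iff_of_nonneg zero_le_one]
          intro i
          rw [Real.norm_eq_abs]
          exact coord_bound' b l hlb hlnn hlsum i
        exact h1.trans hCL.2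
      · have h2 : ‖(phiVec X A l).2‖ = |σr| := rfl
        rw [h2]
        exact hσabs.trans hCL.1
    · rw [Set.mem_singleton_iff] at hv
      subst hv
      have h1 : L ((0 : Fin m → ℝ), (1 : ℝ)) = 1 := by
        rw [hLapp]
        simp
      have h2 : ‖((0 : Fin m → ℝ), (1 : ℝ))‖ = 1 := by
        rw [Prod.norm_def]
        simp
      rw [h1, h2, mul_one]
      exact hC1
  -- bound on the cone
  have hG : ∀ p ∈ circuitGraph X A, ‖p‖ ≤ C * L p := by
    rintro p ⟨k, t, v, ht, hv, rfl⟩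
    calc ‖∑ j, t j • v j‖ ≤ ∑ j, ‖t j • v j‖ := norm_sum_le _ _
      _ = ∑ j, t j * ‖v j‖ := Finset.sum_congr rfl fun j _ => by
          rw [norm_smul, Real.norm_eq_abs, abs_of_nonneg (ht j)]
      _ ≤ ∑ j, t j * (C * L (v j)) := Finset.sum_le_sum fun j _ =>
          mul_le_mul_of_nonneg_left (hgen (v j) (hv j)) (ht j)
      _ = C * L (∑ j, t j • v j) := by
          rw [map_sum]
          rw [Finset.mul_sum]
          refine Finset.sum_congr rfl fun j _ => ?_
          rw [map_smul, smul_eq_mul]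
          ring
  have hclosG : ∀ p ∈ closure (circuitGraph X A), ‖p‖ ≤ C * L p := by
    have hcl : IsClosed {p : (Fin m → ℝ) × ℝ | ‖p‖ ≤ C * L p} :=
      isClosed_le continuous_norm (continuous_const.mul hLcont)
    intro p hp
    exact closure_minimal hG hcl hp
  ext p
  simp only [Set.mem_inter_iff, Set.mem_neg, Set.mem_singleton_iff]
  constructor
  · rintro ⟨h1, h2⟩
    have ha := hclosG p h1
    have hb := hclosG (-p) h2
    rw [norm_neg, map_neg] at hb
    have : ‖p‖ ≤ 0 := by linarith
    exact norm_le_zero_iff.mp this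
  · rintro rfl
    have h0 : (0 : (Fin m → ℝ) × ℝ) ∈ circuitGraph X A := by
      refine ⟨0, fun j => 0, fun j => ((0 : Fin m → ℝ), (1 : ℝ)), fun j => le_refl 0,
        fun j => j.elim0, ?_⟩
      simp
    constructor
    · exact subset_closure h0
    · rw [neg_zero]
      exact subset_closure h0
end

section
/- If ỹ ∈ ℝ^𝒜 satisfies φ_λ(ỹ) < 0 for some normalized X-circuit λ ∈ Λ_X(𝒜), then the entrywise exponential exp(ỹ) does not belong to the dual X-SAGE cone C_X(𝒜)*. -/
open Finset

theorem statement17 {n m : ℕ} (X : Set (Fin n → ℝ)) (hXne : X.Nonempty) (hXcl : IsClosed X)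
    (hXcv : Convex ℝ X) (A : Fin m → Fin n → ℝ) (hA : Function.Injective A) (hm : 0 < m)
    (l : Fin m → ℝ) (hl : l ∈ Lambda X A) (y : Fin m → ℝ) (hy : phiFun X A l y < 0) :
    (fun i => Real.exp (y i)) ∉ dualConeV (Sage X A) := by
  intro hdual
  obtain ⟨b, hb⟩ := Set.mem_iUnion.mp hl
  obtain ⟨⟨⟨hge, hsum⟩, hne0, hfin, -⟩, hlb⟩ := hb
  set s : ℝ := (sigA X A l).toReal with hs
  -- σ_X(-𝒜l) bounds the dot products on X
  have hcoe_le : ∀ x ∈ X, ((dotp (-(Amap A l)) x : ℝ) : EReal) ≤ sigA X A l := by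
    intro x hx
    exact le_iSup₂ (f := fun x (_ : x ∈ X) => ((dotp (-(Amap A l)) x : ℝ) : EReal)) x hx
  have hle : ∀ x ∈ X, dotp (-(Amap A l)) x ≤ s := by
    intro x hx
    have h1 := EReal.toReal_le_toReal (hcoe_le x hx) (EReal.coe_ne_bot _) hfin.ne
    simpa using h1
  -- sum of l over erase b is 1
  have hsumE : ∑ i ∈ Finset.univ.erase b, l i = 1 := by
    have h := Finset.add_sum_erase Finset.univ l (Finset.mem_univ b)
    rw [hsum, hlb] at h
    linarith
  set db : ℝ := -(∑ i ∈ Finset.univ.erase b, l i * y i) - s with hdb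
  set c : Fin m → ℝ := fun i => if i = b then -Real.exp db else l i * Real.exp (-(y i)) with hc
  -- c is an AGE function
  have hage : c ∈ AgeCone X A b := by
    constructor
    · intro i hi
      simp only [hc, if_neg hi]
      exact mul_nonneg (hge i hi) (Real.exp_pos _).le
    · intro x hx
      have hsplit : ∑ i, c i * Real.exp (dotp (A i) x)
          = c b * Real.exp (dotp (A b) x)
            + ∑ i ∈ Finset.univ.erase b, c i * Real.exp (dotp (A i) x) :=
        (Finset.add_sum_erase _ _ (Finset.mem_univ b)).symm
      have hjen : Real.exp (∑ i ∈ Finset.univ.erase b, l i * (-(y i) + dotp (A i) x))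
          ≤ ∑ i ∈ Finset.univ.erase b, l i * Real.exp (-(y i) + dotp (A i) x) := by
        have := convexOn_exp.map_sum_le
          (w := l) (p := fun i => -(y i) + dotp (A i) x)
          (fun i hi => hge i (Finset.ne_of_mem_erase hi)) hsumE
          (fun i _ => Set.mem_univ _)
        simpa [smul_eq_mul] using this
      have hdot : dotp (Amap A l) x = ∑ i, l i * dotp (A i) x := by
        simp only [dotp, Amap, Finset.sum_mul, Finset.mul_sum, mul_assoc]
        exact Finset.sum_comm
      have hErase : ∑ i ∈ Finset.univ.erase b, l i * dotp (A i) x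
          = dotp (Amap A l) x + dotp (A b) x := by
        have h : l b * dotp (A b) x + ∑ i ∈ Finset.univ.erase b, l i * dotp (A i) x
            = ∑ i, l i * dotp (A i) x :=
          Finset.add_sum_erase Finset.univ (fun i => l i * dotp (A i) x) (Finset.mem_univ b)
        rw [hdot, ← h, hlb]
        ring
      have hbound : -s ≤ dotp (Amap A l) x := by
        have h := hle x hx
        have hneg : dotp (-(Amap A l)) x = -dotp (Amap A l) x := by
          simp [dotp, neg_mul, Finset.sum_neg_distrib]
        rw [hneg] at h
        linarith
      have hkey : db + dotp (A b) x
          ≤ ∑ i ∈ Finset.univ.erase b, l i * (-(y i) + dotp (A i) x) := by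
        have hsum2 : ∑ i ∈ Finset.univ.erase b, l i * (-(y i) + dotp (A i) x)
            = -(∑ i ∈ Finset.univ.erase b, l i * y i)
              + ∑ i ∈ Finset.univ.erase b, l i * dotp (A i) x := by
          rw [← Finset.sum_neg_distrib, ← Finset.sum_add_distrib]
          exact Finset.sum_congr rfl fun i _ => by ring
        rw [hsum2, hErase, hdb]
        linarith
      have hcb : c b * Real.exp (dotp (A b) x) = -Real.exp (db + dotp (A b) x) := by
        simp only [hc, if_pos rfl]
        rw [Real.exp_add]
        ring
      have hrest : ∑ i ∈ Finset.univ.erase b, c i * Real.exp (dotp (A i) x)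
          = ∑ i ∈ Finset.univ.erase b, l i * Real.exp (-(y i) + dotp (A i) x) := by
        refine Finset.sum_congr rfl fun i hi => ?_
        simp only [hc, if_neg (Finset.ne_of_mem_erase hi)]
        rw [Real.exp_add]
        ring
      rw [hsplit, hcb, hrest]
      have := (Real.exp_le_exp.mpr hkey).trans hjen
      linarith
  -- c belongs to the SAGE cone
  have hsage : c ∈ Sage X A := by
    refine ⟨fun b' => if b' = b then c else 0, fun b' => ?_, ?_⟩
    · by_cases h : b' = b
      · subst h; simpa using hage
      · simp only [if_neg h]
        exact ⟨fun i _ => le_refl 0, fun x _ => by simp⟩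
    · simp
  -- the pairing with exp(y) is negative
  have hnegsum : ∑ i, Real.exp (y i) * c i < 0 := by
    have hsplit : ∑ i, Real.exp (y i) * c i
        = Real.exp (y b) * c b
          + ∑ i ∈ Finset.univ.erase b, Real.exp (y i) * c i :=
      (Finset.add_sum_erase _ _ (Finset.mem_univ b)).symm
    have h1 : Real.exp (y b) * c b = -Real.exp (y b + db) := by
      simp only [hc, if_pos rfl]
      rw [Real.exp_add]
      ring
    have h2 : ∑ i ∈ Finset.univ.erase b, Real.exp (y i) * c i = 1 := by
      rw [← hsumE]
      refine Finset.sum_congr rfl fun i hi => ?_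
      simp only [hc, if_neg (Finset.ne_of_mem_erase hi)]
      have he : Real.exp (y i) * Real.exp (-(y i)) = 1 := by
        rw [← Real.exp_add]; simp
      calc Real.exp (y i) * (l i * Real.exp (-(y i)))
          = l i * (Real.exp (y i) * Real.exp (-(y i))) := by ring
        _ = l i := by rw [he, mul_one]
    have hphi : y b + db = -(phiFun X A l y) := by
      have hys : ∑ i, y i * l i = -(y b) + ∑ i ∈ Finset.univ.erase b, l i * y i := by
        have h : y b * l b + ∑ i ∈ Finset.univ.erase b, y i * l i = ∑ i, y i * l i :=
          Finset.add_sum_erase Finset.univ (fun i => y i * l i) (Finset.mem_univ b)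
        rw [← h, hlb]
        rw [show ∑ i ∈ Finset.univ.erase b, y i * l i
            = ∑ i ∈ Finset.univ.erase b, l i * y i from
          Finset.sum_congr rfl fun i _ => mul_comm _ _]
        ring
      simp only [phiFun, hys, hdb, ← hs]
      ring
    have hexp : (1 : ℝ) < Real.exp (y b + db) := by
      rw [hphi]
      have : (0:ℝ) < -(phiFun X A l y) := by linarith
      calc (1:ℝ) = Real.exp 0 := Real.exp_zero.symm
        _ < Real.exp (-(phiFun X A l y)) := Real.exp_lt_exp.mpr this
    rw [hsplit, h1, h2]
    linarith
  have := hdual c hsage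
  simp only at this
  linarith
end

section
/- Let S ⊆ ℝᵐ ∖ {0} be a compact set and let T = cone(S) be the set of all finite nonnegative combinations of elements of S (including 0). If the closure cl(T) contains no lines (i.e., cl(T) ∩ (−cl(T)) = {0}), then T is closed. -/
open Finset

/-!
If `cone(S)` is pointed and `0 ∉ S`, then `0` is not in the convex hull `K` of `S` (a convex
combination of elements of `S` equal to `0` would put some `w • s` and `-(w • s)` in the cone).
By Carathéodory's theorem `K` is compact, and `cone(S) = {0} ∪ [0, ∞) • K`. A point of the closure
of `[0, ∞) • K` is a limit of points `t • k` with `‖k‖` bounded below and `‖t • k‖` bounded above,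
so `t` stays in a compact interval and the limit lies in `[0, ∞) • K` again.
-/

section ConeHull

open Pointwise

variable {E : Type*} [AddCommGroup E] [Module ℝ E] {S : Set E}

lemma sum_smul_mem_coneHull {ι : Type*} (t : Finset ι) {w : ι → ℝ} {z : ι → E}
    (hw : ∀ i ∈ t, 0 ≤ w i) (hz : ∀ i ∈ t, z i ∈ S) :
    ∑ i ∈ t, w i • z i ∈ coneHull S := by
  refine ⟨t.card, fun j => w (t.equivFin.symm j), fun j => z (t.equivFin.symm j),
    fun j => hw _ (t.equivFin.symm j).2, fun j => hz _ (t.equivFin.symm j).2, ?_⟩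
  rw [← Finset.sum_coe_sort t (fun i => w i • z i)]
  exact (t.equivFin.symm.sum_comp (fun i => w i • z i)).symm

lemma coneHull_eq_insert_zero_Ici_smul_convexHull (S : Set E) :
    coneHull S = insert 0 (Set.Ici (0 : ℝ) • convexHull ℝ S) := by
  apply Set.Subset.antisymm
  · rintro x ⟨k, t, v, ht, hv, rfl⟩
    rcases (Finset.sum_nonneg fun j _ => ht j).eq_or_lt with htot | htot
    · have hzero : ∀ j, t j = 0 := fun j =>
        (Finset.sum_eq_zero_iff_of_nonneg fun j _ => ht j).mp htot.symm j (Finset.mem_univ j)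
      left
      simp [hzero]
    · right
      refine ⟨∑ j, t j, htot.le, Finset.univ.centerMass t v,
        Finset.centerMass_mem_convexHull _ (fun j _ => ht j) htot fun j _ => hv j, ?_⟩
      show (∑ j, t j) • Finset.univ.centerMass t v = _
      rw [Finset.centerMass, smul_smul, mul_inv_cancel₀ htot.ne', one_smul]
  · rintro x (rfl | ⟨c, hc, y, hy, rfl⟩)
    · exact ⟨0, Fin.elim0, Fin.elim0, (·.elim0), (·.elim0), by simp⟩
    obtain ⟨ι, t, w, z, hw, hw1, hz, rfl⟩ := (convexHull_eq S).subset hy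
    show c • _ ∈ _
    rw [Finset.centerMass_eq_of_sum_1 _ _ hw1, Finset.smul_sum]
    simp_rw [smul_smul]
    exact sum_smul_mem_coneHull t (fun i hi => mul_nonneg hc (hw i hi)) hz

lemma zero_notMem_convexHull_of_coneHull_pointed (h0 : (0 : E) ∉ S)
    (hpointed : ∀ v ∈ coneHull S, -v ∈ coneHull S → v = 0) :
    (0 : E) ∉ convexHull ℝ S := by
  classical
  intro hmem
  obtain ⟨ι, _, z, w, hzS, -, hw, hw1, hsum⟩ := eq_pos_convex_span_of_mem_convexHull hmem
  obtain ⟨i₀⟩ : Nonempty ι := by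
    by_contra hempty
    simp [not_nonempty_iff.mp hempty] at hw1
  have hv : w i₀ • z i₀ ∈ coneHull S := by
    simpa using sum_smul_mem_coneHull {i₀} (fun _ _ => (hw i₀).le) (S := S)
      (fun _ _ => hzS ⟨i₀, rfl⟩)
  have hneg : -(w i₀ • z i₀) ∈ coneHull S := by
    have hsplit := Finset.add_sum_erase Finset.univ (fun i => w i • z i) (Finset.mem_univ i₀)
    rw [hsum, add_eq_zero_iff_neg_eq] at hsplit
    rw [hsplit]
    exact sum_smul_mem_coneHull _ (fun i _ => (hw i).le) fun i _ => hzS ⟨i, rfl⟩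
  rcases smul_eq_zero.mp (hpointed _ hv hneg) with hwi | hzi
  · exact (hw i₀).ne' hwi
  · exact h0 (hzi ▸ hzS ⟨i₀, rfl⟩)

end ConeHull

section Topology

open Pointwise

variable {E : Type*} [NormedAddCommGroup E] [NormedSpace ℝ E]

lemma convexHull_eq_iUnion_image_stdSimplex [FiniteDimensional ℝ E] (S : Set E) :
    convexHull ℝ S = ⋃ k : Fin (Module.finrank ℝ E + 2),
      (fun p : (Fin k → ℝ) × (Fin k → E) => ∑ i, p.1 i • p.2 i) ''
        (stdSimplex ℝ (Fin k) ×ˢ Set.univ.pi fun _ => S) := by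
  apply Set.Subset.antisymm
  · intro x hx
    obtain ⟨ι, _, z, w, hzS, hind, hw, hw1, rfl⟩ := eq_pos_convex_span_of_mem_convexHull hx
    have hcard : Fintype.card ι < Module.finrank ℝ E + 2 := by
      have := hind.card_le_finrank_succ
      have := Submodule.finrank_le (vectorSpan ℝ (Set.range z))
      omega
    let e := (Fintype.equivFin ι).symm
    refine Set.mem_iUnion.mpr ⟨⟨_, hcard⟩, (w ∘ e, z ∘ e), ⟨⟨fun i => (hw _).le, ?_⟩,
      fun i _ => hzS ⟨_, rfl⟩⟩, e.sum_comp fun i => w i • z i⟩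
    rw [← hw1]
    exact e.sum_comp w
  · refine Set.iUnion_subset fun k => ?_
    rintro _ ⟨⟨w, z⟩, ⟨⟨hw, hw1⟩, hz⟩, rfl⟩
    exact (convex_convexHull ℝ S).sum_mem (fun i _ => hw i) hw1
      fun i _ => subset_convexHull ℝ S (hz i (Set.mem_univ i))

lemma IsCompact.convexHull_of_finiteDimensional [FiniteDimensional ℝ E] {S : Set E}
    (hS : IsCompact S) : IsCompact (convexHull ℝ S) := by
  rw [convexHull_eq_iUnion_image_stdSimplex]
  exact isCompact_iUnion fun k =>
    ((isCompact_stdSimplex ℝ (Fin k)).prod (isCompact_univ_pi fun _ => hS)).image (by fun_prop)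

lemma isClosed_Ici_smul_of_isCompact {K : Set E} (hK : IsCompact K) (h0 : (0 : E) ∉ K) :
    IsClosed (Set.Ici (0 : ℝ) • K) := by
  obtain ⟨ε, hε, hball⟩ := Metric.isOpen_iff.mp hK.isClosed.isOpen_compl 0 h0
  have hnorm : ∀ k ∈ K, ε ≤ ‖k‖ := fun k hk => by
    by_contra! hlt
    exact hball (mem_ball_zero_iff.mpr hlt) hk
  refine isClosed_of_closure_subset fun x hx => ?_
  set R := ‖x‖ + 1
  have hlocal : Metric.ball x 1 ∩ Set.Ici (0 : ℝ) • K ⊆ Set.Icc 0 (R / ε) • K := by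
    rintro _ ⟨hy, t, ht, k, hk, rfl⟩
    refine Set.smul_mem_smul ⟨ht, ?_⟩ hk
    rw [le_div_iff₀ hε]
    calc t * ε ≤ t * ‖k‖ := mul_le_mul_of_nonneg_left (hnorm k hk) ht
      _ = ‖t • k‖ := by rw [norm_smul, Real.norm_of_nonneg ht]
      _ ≤ R := by
        rw [Metric.mem_ball, dist_eq_norm] at hy
        linarith [norm_le_norm_add_norm_sub' (t • k) x]
  have hcompact : IsCompact (Set.Icc 0 (R / ε) • K) := isCompact_Icc.smul_set hK
  have hx' : x ∈ Set.Icc 0 (R / ε) • K :=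
    closure_minimal hlocal hcompact.isClosed
      (Metric.isOpen_ball.inter_closure ⟨Metric.mem_ball_self one_pos, hx⟩)
  exact Set.smul_subset_smul_right Set.Icc_subset_Ici_self hx'

end Topology

theorem statement19 {m : ℕ} (S : Set (Fin m → ℝ)) (hS : IsCompact S)
    (h0 : (0 : Fin m → ℝ) ∉ S)
    (hline : closure (coneHull S) ∩ (-(closure (coneHull S))) = {0}) :
    IsClosed (coneHull S) := by
  have hpointed : ∀ v ∈ coneHull S, -v ∈ coneHull S → v = 0 := fun v hv hneg => by
    have : v ∈ closure (coneHull S) ∩ -closure (coneHull S) :=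
      ⟨subset_closure hv, subset_closure hneg⟩
    rwa [hline] at this
  rw [coneHull_eq_insert_zero_Ici_smul_convexHull, Set.insert_eq]
  exact isClosed_singleton.union <| isClosed_Ici_smul_of_isCompact
    hS.convexHull_of_finiteDimensional (zero_notMem_convexHull_of_coneHull_pointed h0 hpointed)
end
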